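/- arXiv:2110.12431 — 4 statements merged into one kernel-verified Lean document; each statement's English description precedes it below -/
import Mathlib

section
/- Let X be a Helly graph and let G be a group of automorphisms of X. Then the following are equivalent: (1) G setwise stabilizes some clique of X; (2) G has a bounded orbit on the vertices of X. -/
open SimpleGraph Pointwise

/-- A Helly graph: a connected simple graph in which every family of pairwise
intersecting combinatorial balls has a common point. -/
def IsHellyGraph {V : Type*} (Γ : SimpleGraph V) : Prop :=
  Γ.Connected ∧
  ∀ S : Set (V × ℕ),
    (∀ p ∈ S, ∀ q ∈ S, ∃ y : V, Γ.dist p.1 y ≤ p.2 ∧ Γ.dist q.1 y ≤ q.2) →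
    ∃ y : V, ∀ p ∈ S, Γ.dist p.1 y ≤ p.2

/-- In a connected graph, if `dist u v ≤ a + b` then there is a point within `a` of `u`
and within `b` of `v`. -/
private lemma helly_exists_between {V : Type*} {Γ : SimpleGraph V} (hc : Γ.Connected) :
    ∀ (a b : ℕ) (u v : V), Γ.dist u v ≤ a + b → ∃ y : V, Γ.dist u y ≤ a ∧ Γ.dist v y ≤ b := by
  intro a
  induction a with
  | zero =>
    intro b u v h
    refine ⟨u, by simp [SimpleGraph.dist_self], ?_⟩
    rw [SimpleGraph.dist_comm]
    simpa using h
  | succ a ih =>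
    intro b u v h
    by_cases h' : Γ.dist u v ≤ a + b
    · obtain ⟨y, hy1, hy2⟩ := ih b u v h'
      exact ⟨y, hy1.trans (Nat.le_succ a), hy2⟩
    · obtain ⟨p, hp⟩ := (hc u v).exists_walk_length_eq_dist
      cases p with
      | nil => exact absurd (by simp [SimpleGraph.dist_self]) h'
      | @cons _ w _ hadj q =>
        have hq : Γ.dist w v ≤ a + b := by
          have h1 := SimpleGraph.dist_le q
          have h2 : q.length + 1 = Γ.dist u v := by simpa using hp
          omega
        obtain ⟨y, hy1, hy2⟩ := ih b w v hq
        refine ⟨y, ?_, hy2⟩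
        have ht := hc.dist_triangle (u := u) (v := w) (w := y)
        have huw : Γ.dist u w ≤ 1 := by
          have := SimpleGraph.dist_le hadj.toWalk
          simpa using this
        omega

/-- A group acting by graph automorphisms preserves the path metric. -/
private lemma helly_dist_smul_eq {V : Type*} {Γ : SimpleGraph V} (hc : Γ.Connected)
    {G : Type*} [Group G] [MulAction G V]
    (hact : ∀ (g : G) (u v : V), Γ.Adj (g • u) (g • v) ↔ Γ.Adj u v)
    (g : G) (u v : V) : Γ.dist (g • u) (g • v) = Γ.dist u v := by
  have key : ∀ (g : G) (u v : V), Γ.dist (g • u) (g • v) ≤ Γ.dist u v := by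
    intro g u v
    obtain ⟨p, hp⟩ := (hc u v).exists_walk_length_eq_dist
    let f : Γ →g Γ := ⟨fun x => g • x, fun {a b} h => (hact g a b).mpr h⟩
    have h2 := SimpleGraph.dist_le (p.map f)
    rwa [SimpleGraph.Walk.length_map, hp] at h2
  refine le_antisymm (key g u v) ?_
  have h3 := key g⁻¹ (g • u) (g • v)
  simpa [inv_smul_smul] using h3

/-- For a Helly graph `Γ` and a group `G` acting on the vertices of `Γ` by graph
automorphisms, `G` stabilizes a clique iff `G` has a bounded orbit. -/
theorem helly_elliptic_iff_bounded_orbit {V : Type*} (Γ : SimpleGraph V)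
    (hΓ : IsHellyGraph Γ) (G : Type*) [Group G] [MulAction G V]
    (hact : ∀ (g : G) (u v : V), Γ.Adj (g • u) (g • v) ↔ Γ.Adj u v) :
    (∃ s : Set V, Γ.IsClique s ∧ s.Nonempty ∧ ∀ g : G, g • s = s) ↔
    (∃ (x : V) (C : ℕ), ∀ g : G, Γ.dist x (g • x) ≤ C) := by
  obtain ⟨hc, hH⟩ := hΓ
  constructor
  · rintro ⟨s, hclique, ⟨x, hx⟩, hinv⟩
    refine ⟨x, 1, fun g => ?_⟩
    have hgx : g • x ∈ s := by rw [← hinv g]; exact Set.smul_mem_smul_set hx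
    by_cases he : x = g • x
    · rw [← he]; simp [SimpleGraph.dist_self]
    · exact le_of_eq (SimpleGraph.dist_eq_one_iff_adj.mpr (hclique hx hgx he))
  · rintro ⟨x, C, hC⟩
    have main : ∀ C : ℕ, ∀ S : Set V, S.Nonempty → (∀ (g : G), ∀ y ∈ S, g • y ∈ S) →
        (∀ u ∈ S, ∀ v ∈ S, Γ.dist u v ≤ C) →
        ∃ s : Set V, Γ.IsClique s ∧ s.Nonempty ∧ ∀ g : G, g • s = s := by
      intro C
      induction C using Nat.strong_induction_on with
      | _ C ih =>
        intro S hne hinv hdiam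
        by_cases hC1 : C ≤ 1
        · refine ⟨S, ?_, hne, fun g => ?_⟩
          · rw [SimpleGraph.isClique_iff]
            intro u hu v hv huv
            have h1 : Γ.dist u v ≤ 1 := le_trans (hdiam u hu v hv) hC1
            have h0 : 0 < Γ.dist u v := hc.pos_dist_of_ne huv
            exact SimpleGraph.dist_eq_one_iff_adj.mp (le_antisymm h1 h0)
          · ext y
            simp only [Set.mem_smul_set]
            constructor
            · rintro ⟨z, hz, rfl⟩; exact hinv g z hz
            · intro hy; exact ⟨g⁻¹ • y, hinv g⁻¹ y hy, smul_inv_smul g y⟩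
        · -- C ≥ 2 : contract
          set r : ℕ := (C + 1) / 2 with hrdef
          -- the increasing chain of dominated sets
          let F : ℕ → Set V :=
            fun n => Nat.rec S (fun _ T => T ∪ {y | ∀ w ∈ T, Γ.dist w y ≤ r}) n
          have hFs : ∀ n, F (n + 1) = F n ∪ {y | ∀ w ∈ F n, Γ.dist w y ≤ r} := fun n => rfl
          have hFne : ∀ n, (F n).Nonempty := by
            intro n
            induction n with
            | zero => exact hne
            | succ n ihn => rw [hFs]; exact ihn.mono Set.subset_union_left
          have hFdiam : ∀ n, ∀ u ∈ F n, ∀ v ∈ F n, Γ.dist u v ≤ 2 * r := by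
            intro n
            induction n with
            | zero =>
              intro u hu v hv
              have := hdiam u hu v hv
              omega
            | succ n ihn =>
              intro u hu v hv
              rw [hFs] at hu hv
              obtain ⟨s0, hs0⟩ := hFne n
              rcases hu with hu | hu <;> rcases hv with hv | hv
              · exact ihn u hu v hv
              · have := hv u hu; omega
              · rw [SimpleGraph.dist_comm]
                have := hu v hv; omega
              · have h1 : Γ.dist u s0 ≤ r := by
                  rw [SimpleGraph.dist_comm]; exact hu s0 hs0
                have h2 : Γ.dist s0 v ≤ r := hv s0 hs0
                have h3 := hc.dist_triangle (u := u) (v := s0) (w := v)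
                omega
          have hFinv : ∀ n (g : G), ∀ y ∈ F n, g • y ∈ F n := by
            intro n
            induction n with
            | zero => exact hinv
            | succ n ihn =>
              intro g y hy
              rw [hFs] at hy ⊢
              rcases hy with hy | hy
              · exact Or.inl (ihn g y hy)
              · refine Or.inr fun w hw => ?_
                have hw' : g⁻¹ • w ∈ F n := ihn g⁻¹ w hw
                have heq := helly_dist_smul_eq hc hact g⁻¹ w (g • y)
                rw [inv_smul_smul] at heq
                rw [← heq]
                exact hy _ hw'
          have hmono : Monotone F :=
            monotone_nat_of_le_succ fun n => by rw [hFs]; exact Set.subset_union_left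
          set Sstar : Set V := ⋃ n, F n with hSstar
          have hSdiam : ∀ u ∈ Sstar, ∀ v ∈ Sstar, Γ.dist u v ≤ 2 * r := by
            intro u hu v hv
            rw [hSstar, Set.mem_iUnion] at hu hv
            obtain ⟨m, hu⟩ := hu
            obtain ⟨n, hv⟩ := hv
            exact hFdiam (max m n) u (hmono (le_max_left m n) hu) v
              (hmono (le_max_right m n) hv)
          have hSinv : ∀ (g : G), ∀ y ∈ Sstar, g • y ∈ Sstar := by
            intro g y hy
            rw [hSstar, Set.mem_iUnion] at hy ⊢
            obtain ⟨n, hy⟩ := hy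
            exact ⟨n, hFinv n g y hy⟩
          set T : Set V := {y | ∀ w ∈ Sstar, Γ.dist w y ≤ r} with hT
          have hTne : T.Nonempty := by
            have hpair : ∀ p ∈ (fun w => (w, r)) '' Sstar, ∀ q ∈ (fun w => (w, r)) '' Sstar,
                ∃ y : V, Γ.dist p.1 y ≤ p.2 ∧ Γ.dist q.1 y ≤ q.2 := by
              rintro p ⟨w, hw, rfl⟩ q ⟨w', hw', rfl⟩
              refine helly_exists_between hc r r w w' ?_
              have := hSdiam w hw w' hw'
              omega
            obtain ⟨y, hy⟩ := hH ((fun w => (w, r)) '' Sstar) hpair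
            exact ⟨y, fun w hw => hy (w, r) (Set.mem_image_of_mem _ hw)⟩
          have hTsub : T ⊆ Sstar := by
            intro y hy
            have h1 : y ∈ F 1 := by
              show y ∈ F (0 + 1)
              rw [hFs 0]
              exact Or.inr fun w hw => hy w (Set.mem_iUnion.mpr ⟨0, hw⟩)
            exact Set.mem_iUnion.mpr ⟨1, h1⟩
          have hTdiam : ∀ u ∈ T, ∀ v ∈ T, Γ.dist u v ≤ r := fun u hu v hv =>
            hv u (hTsub hu)
          have hTinv : ∀ (g : G), ∀ y ∈ T, g • y ∈ T := by
            intro g y hy w hw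
            have hw' := hSinv g⁻¹ w hw
            have heq := helly_dist_smul_eq hc hact g⁻¹ w (g • y)
            rw [inv_smul_smul] at heq
            rw [← heq]
            exact hy _ hw'
          exact ih r (by omega) T hTne hTinv hTdiam
    apply main C (Set.range fun g : G => g • x)
    · exact ⟨x, 1, one_smul G x⟩
    · rintro g y ⟨h, rfl⟩
      exact ⟨g * h, by simp [mul_smul]⟩
    · rintro u ⟨gu, rfl⟩ v ⟨gv, rfl⟩
      show Γ.dist (gu • x) (gv • x) ≤ C
      have heq := helly_dist_smul_eq hc hact gu⁻¹ (gu • x) (gv • x)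
      rw [inv_smul_smul, ← mul_smul] at heq
      rw [← heq]
      exact hC (gu⁻¹ * gv)
end

section
/- Let X be a Helly graph, let n ≥ 2, and let σ_0, …, σ_n be a local 1-clique-path in X. Let x_0 ∈ σ_0 be such that σ_1 ⊆ B(x_0, 1), and let x_n ∈ σ_n be such that σ_{n−1} ⊆ B(x_n, 1). Then the sequence {x_0}, σ_1, σ_2, …, σ_{n−1}, {x_n} is a 1-clique-path. -/
open SimpleGraph Pointwise

/-- Transverse distance `σ ≷ τ = n` between two cliques. -/
def TransDist {V : Type*} (Γ : SimpleGraph V) (σ τ : Set V) (n : ℕ) : Prop :=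
  (∀ x ∈ σ, ∀ y ∈ τ, n ≤ Γ.dist x y) ∧
  (∃ x ∈ σ, ∀ y ∈ τ, Γ.dist x y = n) ∧
  (∃ y ∈ τ, ∀ x ∈ σ, Γ.dist x y = n)

/-- `σ 0, …, σ n` is an `L`-clique-path. -/
def IsCliquePath {V : Type*} (Γ : SimpleGraph V) (L n : ℕ) (σ : ℕ → Set V) : Prop :=
  (∀ i ≤ n, Γ.IsClique (σ i) ∧ (σ i).Nonempty) ∧
  (∀ i ≤ n, ∀ j ≤ n, i ≠ j → Disjoint (σ i) (σ j)) ∧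
  (∀ i j : ℕ, i < j → j ≤ n → TransDist Γ (σ i) (σ j) ((j - i) * L)) ∧
  (∀ i : ℕ, 1 ≤ i → i + 1 ≤ n →
    ∀ ρ : Set V, Γ.IsClique ρ → σ i ⊆ ρ →
      TransDist Γ ρ (σ (i - 1)) L → TransDist Γ ρ (σ (i + 1)) L → ρ = σ i)

/-- `σ 0, …, σ n` is a local `L`-clique-path: any three consecutive terms form
an `L`-clique-path. -/
def IsLocalCliquePath {V : Type*} (Γ : SimpleGraph V) (L n : ℕ) (σ : ℕ → Set V) : Prop :=
  ∀ i : ℕ, i + 2 ≤ n → IsCliquePath Γ L 2 (fun k => σ (i + k))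

/-- A bi-infinite `L`-clique-path. -/
def IsCliquePathZ {V : Type*} (Γ : SimpleGraph V) (L : ℕ) (σ : ℤ → Set V) : Prop :=
  (∀ n : ℤ, Γ.IsClique (σ n) ∧ (σ n).Nonempty) ∧
  (∀ n m : ℤ, n ≠ m → Disjoint (σ n) (σ m)) ∧
  (∀ n m : ℤ, n ≠ m → TransDist Γ (σ n) (σ m) ((n - m).natAbs * L)) ∧
  (∀ n : ℤ, ∀ ρ : Set V, Γ.IsClique ρ → σ n ⊆ ρ →
    TransDist Γ ρ (σ (n - 1)) L → TransDist Γ ρ (σ (n + 1)) L → ρ = σ n)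

/-- A bi-infinite local `L`-clique-path. -/
def IsLocalCliquePathZ {V : Type*} (Γ : SimpleGraph V) (L : ℕ) (σ : ℤ → Set V) : Prop :=
  ∀ n : ℤ, IsCliquePath Γ L 2 (fun k : ℕ => σ (n + k))

section Helpers
variable {V : Type*} {Γ : SimpleGraph V} {σ : ℕ → Set V} {n : ℕ}



lemma dist_getVert_le (hc : Γ.Connected) {a b : V} (p : Γ.Walk a b) (k : ℕ) :
    Γ.dist a (p.getVert k) ≤ k := by
  induction p generalizing k with
  | nil => simp [SimpleGraph.Walk.getVert, SimpleGraph.dist_self]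
  | @cons u v w h q ih =>
    cases k with
    | zero => simp [SimpleGraph.Walk.getVert]
    | succ k =>
      calc Γ.dist u ((Walk.cons h q).getVert (k+1)) ≤
          Γ.dist u v + Γ.dist v (q.getVert k) := hc.dist_triangle
        _ ≤ 1 + k := by
            have : Γ.dist u v = 1 := SimpleGraph.dist_eq_one_iff_adj.mpr h
            exact Nat.add_le_add this.le (ih k)
        _ = k + 1 := by omega

lemma exists_mid (hc : Γ.Connected) {a b : V} {r s : ℕ} (h : Γ.dist a b ≤ r + s) :
    ∃ y, Γ.dist a y ≤ r ∧ Γ.dist b y ≤ s := by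
  obtain ⟨p, hp⟩ := hc.exists_walk_length_eq_dist a b
  refine ⟨p.getVert (min r p.length), (dist_getVert_le hc p _).trans (Nat.min_le_left _ _), ?_⟩
  have h1 : Γ.dist b (p.reverse.getVert (p.length - min r p.length)) ≤ p.length - min r p.length :=
    dist_getVert_le hc p.reverse _
  rw [SimpleGraph.Walk.getVert_reverse] at h1
  have h2 : p.length - (p.length - min r p.length) = min r p.length := by omega
  rw [h2] at h1
  exact h1.trans (by omega)


lemma TransDist.symm {s t : Set V} {m : ℕ} (h : TransDist Γ s t m) : TransDist Γ t s m := by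
  obtain ⟨h1, h2, h3⟩ := h
  refine ⟨fun x hx y hy => Γ.dist_comm ▸ h1 y hy x hx, ?_, ?_⟩
  · obtain ⟨y, hy, hy'⟩ := h3; exact ⟨y, hy, fun x hx => Γ.dist_comm ▸ hy' x hx⟩
  · obtain ⟨x, hx, hx'⟩ := h2; exact ⟨x, hx, fun y hy => Γ.dist_comm ▸ hx' y hy⟩

lemma isCliquePath_congr {L m : ℕ} {σ' : ℕ → Set V} (h : ∀ k ≤ m, σ k = σ' k)
    (hp : IsCliquePath Γ L m σ) : IsCliquePath Γ L m σ' := by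
  obtain ⟨p1, p2, p3, p4⟩ := hp
  refine ⟨fun i hi => h i hi ▸ p1 i hi,
    fun i hi j hj hij => h i hi ▸ h j hj ▸ p2 i hi j hj hij,
    fun i j hij hj => h i (le_of_lt (lt_of_lt_of_le hij hj)) ▸ h j hj ▸ p3 i j hij hj,
    fun i h1 h2 ρ hρ hsub hl hr => ?_⟩
  rw [← h i (by omega)]
  exact p4 i h1 h2 ρ hρ (h i (by omega) ▸ hsub)
    (h (i-1) (by omega) ▸ hl) (h (i+1) (by omega) ▸ hr)

lemma isLocalCliquePath_shift {m a : ℕ} (h : IsLocalCliquePath Γ 1 n σ)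
    (ham : a + m ≤ n) : IsLocalCliquePath Γ 1 m (fun k => σ (a + k)) := by
  intro i hi
  refine isCliquePath_congr (σ := fun k => σ (a + i + k)) (fun k hk => by
    show σ (a + i + k) = σ (a + (i + k)); rw [Nat.add_assoc]) (h (a + i) (by omega))

lemma isCliquePath_two_reverse {L : ℕ} (h : IsCliquePath Γ L 2 σ) :
    IsCliquePath Γ L 2 (fun k => σ (2 - k)) := by
  obtain ⟨p1, p2, p3, p4⟩ := h
  refine ⟨fun i hi => p1 (2-i) (by omega),
    fun i hi j hj hij => p2 (2-i) (by omega) (2-j) (by omega) (by omega),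
    fun i j hij hj => ?_, fun i h1 h2 ρ hρ hsub hl hr => ?_⟩
  · have := (p3 (2-j) (2-i) (by omega) (by omega)).symm
    have e : 2 - i - (2 - j) = j - i := by omega
    rwa [e] at this
  · have hi : i = 1 := by omega
    subst hi
    exact p4 1 le_rfl le_rfl ρ hρ hsub hr hl

lemma isLocalCliquePath_reverse (h : IsLocalCliquePath Γ 1 n σ) :
    IsLocalCliquePath Γ 1 n (fun k => σ (n - k)) := by
  intro i hi
  refine isCliquePath_congr (σ := fun k => σ (n - i - 2 + (2 - k))) (fun k hk => by
    have e : n - i - 2 + (2 - k) = n - (i + k) := by omega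
    show σ (n - i - 2 + (2 - k)) = σ (n - (i + k))
    rw [e])
    (isCliquePath_two_reverse (h (n - i - 2) (by omega)))

section accessors
variable (hσ : IsLocalCliquePath Γ 1 n σ) (hn : 2 ≤ n)
include hσ hn

lemma lcp_clique {i : ℕ} (hi : i ≤ n) : Γ.IsClique (σ i) ∧ (σ i).Nonempty := by
  rcases le_or_gt (i + 2) n with h | h
  · have := (hσ i h).1 0 (by omega)
    simpa using this
  · have := (hσ (n-2) (by omega)).1 (i - (n-2)) (by omega)
    have e : n - 2 + (i - (n-2)) = i := by omega
    simpa [e] using this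

lemma lcp_consec {i : ℕ} (hi : i + 1 ≤ n) : TransDist Γ (σ i) (σ (i+1)) 1 := by
  rcases le_or_gt (i + 2) n with h | h
  · have := (hσ i h).2.2.1 0 1 (by omega) (by omega)
    simpa using this
  · have := (hσ (n-2) (by omega)).2.2.1 1 2 (by omega) (by omega)
    have e1 : n - 2 + 1 = i := by omega
    have e2 : n - 2 + 2 = i + 1 := by omega
    simpa [e1, e2] using this

omit hn in
lemma lcp_two {i : ℕ} (hi : i + 2 ≤ n) : TransDist Γ (σ i) (σ (i+2)) 2 := by
  have := (hσ i hi).2.2.1 0 2 (by omega) (by omega)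
  simpa using this

omit hn in
lemma lcp_max {i : ℕ} (h1 : 1 ≤ i) (h2 : i + 1 ≤ n) :
    ∀ ρ : Set V, Γ.IsClique ρ → σ i ⊆ ρ →
      TransDist Γ ρ (σ (i-1)) 1 → TransDist Γ ρ (σ (i+1)) 1 → ρ = σ i := by
  intro ρ hρ hsub hl hr
  have := (hσ (i-1) (by omega)).2.2.2 1 le_rfl le_rfl ρ hρ
  have e0 : i - 1 + 0 = i - 1 := by omega
  have e1 : i - 1 + 1 = i := by omega
  have e2 : i - 1 + 2 = i + 1 := by omega
  simp only [e1, e2] at this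
  refine this hsub ?_ (by simpa using hr)
  simpa [e0] using hl

end accessors

lemma isLocalCliquePath_congr {L m : ℕ} {σ' : ℕ → Set V} (h : ∀ k ≤ m, σ k = σ' k)
    (hp : IsLocalCliquePath Γ L m σ) : IsLocalCliquePath Γ L m σ' := by
  intro i hi
  exact isCliquePath_congr (fun k hk => h (i + k) (by omega)) (hp i hi)

lemma dist_one_of_le (hc : Γ.Connected) {a b : V} (h : Γ.dist a b ≤ 1) (hne : a ≠ b) :
    Γ.dist a b = 1 := by
  have := hc.pos_dist_of_ne hne; omega

lemma clique_dist_le (h : Γ.IsClique s) {a b : V} (ha : a ∈ s) (hb : b ∈ s) :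
    Γ.dist a b ≤ 1 := by
  by_cases hab : a = b
  · subst hab; simp [SimpleGraph.dist_self]
  · exact le_of_eq (SimpleGraph.dist_eq_one_iff_adj.mpr (h ha hb hab))

section chain
variable (hσ : IsLocalCliquePath Γ 1 n σ) (hn : 2 ≤ n) (hc : Γ.Connected)
include hσ hn hc

lemma lcp_chain {x₀ : V} (hx₀b : ∀ y ∈ σ 1, Γ.dist x₀ y ≤ 1) :
    ∀ j ≤ n, 1 ≤ j → ∀ y ∈ σ j, Γ.dist x₀ y ≤ j := by
  intro j
  induction j with
  | zero => omega
  | succ j ih =>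
    intro hj _ y hy
    rcases Nat.eq_zero_or_pos j with rfl | hj1
    · exact hx₀b y hy
    · obtain ⟨u, hu, hu'⟩ := (lcp_consec hσ hn (i := j) (by omega)).2.1
      calc Γ.dist x₀ y ≤ Γ.dist x₀ u + Γ.dist u y := hc.dist_triangle
        _ ≤ j + 1 := Nat.add_le_add (ih (by omega) hj1 u hu) (le_of_eq (hu' y hy))

end chain


lemma lemmaE (hΓ : IsHellyGraph Γ) :
    ∀ n : ℕ, 2 ≤ n → ∀ σ : ℕ → Set V, IsLocalCliquePath Γ 1 n σ →
    ∀ x₀ ∈ σ 0, (∀ y ∈ σ 1, Γ.dist x₀ y ≤ 1) →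
    (∀ j, 1 ≤ j → j + 1 ≤ n → ∀ y ∈ σ j, Γ.dist x₀ y = j) ∧
    (∀ xe ∈ σ n, (∀ y ∈ σ (n - 1), Γ.dist xe y ≤ 1) → Γ.dist x₀ xe = n) := by
  have hc : Γ.Connected := hΓ.1
  intro n hn
  induction n, hn using Nat.le_induction with
  | base =>
    intro σ hσ x₀ hx₀ hx₀b
    have hn : 2 ≤ 2 := le_rfl
    constructor
    · intro j hj1 hj2 y hy
      have hj : j = 1 := by omega
      subst hj
      have hge := (lcp_consec hσ hn (i := 0) (by omega)).1 x₀ hx₀ y hy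
      have hle := hx₀b y hy
      omega
    · intro xe hxe hdom
      have hge := (lcp_two hσ (i := 0) (by omega)).1 x₀ hx₀ xe hxe
      obtain ⟨y, hy⟩ := (lcp_clique hσ hn (i := 1) (by omega)).2
      have h1 : Γ.dist x₀ y ≤ 1 := hx₀b y hy
      have h2 : Γ.dist y xe ≤ 1 := by
        have := hdom y hy; rwa [Γ.dist_comm]
      have hle : Γ.dist x₀ xe ≤ 2 := le_trans (hc.dist_triangle (v := y)) (by omega)
      omega
  | succ n hn2 ih =>
    intro σ hσ x₀ hx₀ hx₀b
    have hN : 2 ≤ n + 1 := by omega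
    have hpre : IsLocalCliquePath Γ 1 n σ := fun i hi => hσ i (by omega)
    obtain ⟨E1pre, E2pre⟩ := ih σ hpre x₀ hx₀ hx₀b
    have chain := lcp_chain hσ hN hc hx₀b
    -- E2 at n+1
    have E2 : ∀ xe ∈ σ (n + 1), (∀ y ∈ σ n, Γ.dist xe y ≤ 1) → Γ.dist x₀ xe = n + 1 := by
      intro xe hxe hdom
      obtain ⟨y0, hy0⟩ := (lcp_clique hσ hN (i := n) (by omega)).2
      have hle : Γ.dist x₀ xe ≤ n + 1 := by
        have h1 : Γ.dist x₀ y0 ≤ n := chain n (by omega) (by omega) y0 hy0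
        have h2 : Γ.dist y0 xe ≤ 1 := by have := hdom y0 hy0; rwa [Γ.dist_comm]
        exact le_trans (hc.dist_triangle (v := y0)) (by omega)
      by_contra hne
      have hassume : Γ.dist x₀ xe ≤ n := by omega
      -- consecutive/two trans dists with rewritten indices
      have cons_n : TransDist Γ (σ n) (σ (n + 1)) 1 := lcp_consec hσ hN (by omega)
      have cons_n1 : TransDist Γ (σ (n - 1)) (σ n) 1 := by
        have h := lcp_consec hσ hN (i := n - 1) (by omega)
        have e : n - 1 + 1 = n := by omega
        rwa [e] at h
      have two_n1 : TransDist Γ (σ (n - 1)) (σ (n + 1)) 2 := by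
        have h := lcp_two hσ (i := n - 1) (by omega)
        have e : n - 1 + 2 = n + 1 := by omega
        rwa [e] at h
      set T : Set V := insert xe (σ n ∪ σ (n - 1)) with hT
      have hxeT : xe ∈ T := Set.mem_insert _ _
      have hσnT : σ n ⊆ T := fun z hz => Set.mem_insert_of_mem _ (Set.mem_union_left _ hz)
      have hσn1T : σ (n - 1) ⊆ T := fun z hz => Set.mem_insert_of_mem _ (Set.mem_union_right _ hz)
      obtain ⟨w, hw, hw'⟩ := cons_n1.2.1  -- w ∈ σ (n-1), dist w · = 1 on σ n
      obtain ⟨u, hu, hu'⟩ := cons_n1.2.2  -- u ∈ σ n, dist · u = 1 on σ (n-1)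
      have cliq_n := (lcp_clique hσ hN (i := n) (by omega)).1
      have cliq_n1 := (lcp_clique hσ hN (i := n - 1) (by omega)).1
      have hT0 : ∀ z ∈ T, Γ.dist x₀ z ≤ n := by
        intro z hz
        rcases Set.mem_insert_iff.mp hz with rfl | hz
        · exact hassume
        · rcases hz with hz | hz
          · exact chain n (by omega) (by omega) z hz
          · exact le_trans (chain (n - 1) (by omega) (by omega) z hz) (by omega)
      have hT2 : ∀ z ∈ T, ∀ z' ∈ T, Γ.dist z z' ≤ 2 := by
        have key : ∀ z ∈ T, Γ.dist z u ≤ 1 := by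
          intro z hz
          rcases Set.mem_insert_iff.mp hz with rfl | hz
          · exact hdom u hu
          · rcases hz with hz | hz
            · exact clique_dist_le cliq_n hz hu
            · exact le_of_eq (hu' z hz)
        intro z hz z' hz'
        calc Γ.dist z z' ≤ Γ.dist z u + Γ.dist u z' := hc.dist_triangle
          _ ≤ 2 := by
            have h1 := key z hz
            have h2 := key z' hz'
            rw [Γ.dist_comm] at h2
            omega
      set S : Set (V × ℕ) := insert (x₀, n - 1) ((fun z => (z, 1)) '' T) with hS
      have hpair : ∀ p ∈ S, ∀ q ∈ S, ∃ y : V, Γ.dist p.1 y ≤ p.2 ∧ Γ.dist q.1 y ≤ q.2 := by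
        intro p hp q hq
        rcases Set.mem_insert_iff.mp hp with rfl | hp' <;> rcases Set.mem_insert_iff.mp hq with rfl | hq'
        case inr.inr => obtain ⟨z, hz, rfl⟩ := hp'; obtain ⟨z', hz', rfl⟩ := hq'
                        exact exists_mid hc (by have := hT2 z hz z' hz'; simp only []; omega)
        case inr.inl => obtain ⟨z, hz, rfl⟩ := hp'
                        refine exists_mid hc ?_
                        have := hT0 z hz
                        rw [Γ.dist_comm] at this
                        simp only []; omega
        case inl.inr => obtain ⟨z', hz', rfl⟩ := hq'
                        exact exists_mid hc (by have := hT0 z' hz'; simp only []; omega)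
        · exact ⟨x₀, by simp [SimpleGraph.dist_self]⟩
      obtain ⟨v, hv⟩ := hΓ.2 S hpair
      have hv0 : Γ.dist x₀ v ≤ n - 1 := hv (x₀, n - 1) (Set.mem_insert _ _)
      have hv1 : ∀ z ∈ T, Γ.dist z v ≤ 1 := fun z hz =>
        hv (z, 1) (Set.mem_insert_of_mem _ ⟨z, hz, rfl⟩)
      -- v is not in σ (n-1), σ n, σ (n+1)
      have hvn1 : v ∉ σ (n - 1) := by
        intro hmem
        have h1 := two_n1.1 v hmem xe hxe
        have h2 := hv1 xe hxeT
        rw [Γ.dist_comm] at h2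
        omega
      have hvn2 : v ∉ σ (n + 1) := by
        intro hmem
        have h1 := two_n1.1 w hw v hmem
        have h2 := hv1 w (hσn1T hw)
        omega
      have hvn : v ∉ σ n := by
        intro hmem
        have hd : ∀ y ∈ σ (n - 1), Γ.dist v y ≤ 1 := by
          intro y hy
          have := hv1 y (hσn1T hy); rwa [Γ.dist_comm] at this
        have := E2pre v hmem hd
        omega
      -- the clique ρ = insert v (σ n)
      have hρ : Γ.IsClique (insert v (σ n)) := by
        apply cliq_n.insert
        intro b hb hbv
        have h1 := hv1 b (hσnT hb)
        rw [SimpleGraph.dist_eq_one_iff_adj.symm, Γ.dist_comm]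
        exact dist_one_of_le hc h1 (fun h => hbv h.symm)
      have T1 : TransDist Γ (insert v (σ n)) (σ (n - 1)) 1 := by
        refine ⟨?_, ⟨v, Set.mem_insert _ _, ?_⟩, ⟨w, hw, ?_⟩⟩
        · intro a ha b hb
          rcases Set.mem_insert_iff.mp ha with rfl | ha
          · exact hc.pos_dist_of_ne (fun h => hvn1 (h ▸ hb))
          · have := cons_n1.1 b hb a ha; rw [Γ.dist_comm] at this; omega
        · intro b hb
          have h1 := hv1 b (hσn1T hb)
          rw [Γ.dist_comm] at h1
          exact dist_one_of_le hc h1 (fun h => hvn1 (h ▸ hb))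
        · intro a ha
          rcases Set.mem_insert_iff.mp ha with rfl | ha
          · have h1 := hv1 w (hσn1T hw)
            rw [Γ.dist_comm] at h1
            exact dist_one_of_le hc h1 (fun h => hvn1 (h ▸ hw))
          · have := hw' a ha; rw [Γ.dist_comm]; exact this
      have T2 : TransDist Γ (insert v (σ n)) (σ (n + 1)) 1 := by
        obtain ⟨u2, hu2, hu2'⟩ := cons_n.2.1
        refine ⟨?_, ⟨u2, Set.mem_insert_of_mem _ hu2, hu2'⟩, ⟨xe, hxe, ?_⟩⟩
        · intro a ha b hb
          rcases Set.mem_insert_iff.mp ha with rfl | ha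
          · exact hc.pos_dist_of_ne (fun h => hvn2 (h ▸ hb))
          · exact cons_n.1 a ha b hb
        · intro a ha
          rcases Set.mem_insert_iff.mp ha with rfl | ha
          · have h1 := hv1 xe hxeT
            rw [Γ.dist_comm] at h1
            exact dist_one_of_le hc h1 (fun h => hvn2 (h ▸ hxe))
          · have h1 := hdom a ha
            rw [Γ.dist_comm] at h1
            have h2 := cons_n.1 a ha xe hxe
            omega
      have := lcp_max hσ (i := n) (by omega) (by omega) (insert v (σ n)) hρ
          (Set.subset_insert _ _) T1 T2
      exact hvn (this ▸ Set.mem_insert v (σ n))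
    refine ⟨?_, by simpa using E2⟩
    intro j hj1 hj2 y hy
    rcases lt_or_eq_of_le (show j ≤ n by omega) with hjn | rfl
    · exact E1pre j hj1 (by omega) y hy
    · obtain ⟨c, hcmem, hc'⟩ := (lcp_consec hσ hN (i := j) (by omega)).2.2
      have hcd : Γ.dist x₀ c = j + 1 := by
        apply E2 c hcmem
        intro y' hy'
        rw [Γ.dist_comm]; exact le_of_eq (hc' y' hy')
      have h1 : Γ.dist x₀ c ≤ Γ.dist x₀ y + Γ.dist y c := hc.dist_triangle
      have h2 : Γ.dist y c = 1 := hc' y hy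
      have h3 : Γ.dist x₀ y ≤ j := chain j (by omega) (by omega) y hy
      omega


end Helpers

/-- Local 1-clique-paths between vertices are global 1-clique-paths. -/
theorem local_clique_path_between_vertices {V : Type*} (Γ : SimpleGraph V)
    (hΓ : IsHellyGraph Γ) (n : ℕ) (hn : 2 ≤ n)
    (σ : ℕ → Set V) (hσ : IsLocalCliquePath Γ 1 n σ)
    (x₀ : V) (hx₀ : x₀ ∈ σ 0) (hx₀b : ∀ y ∈ σ 1, Γ.dist x₀ y ≤ 1)
    (xₙ : V) (hxₙ : xₙ ∈ σ n) (hxₙb : ∀ y ∈ σ (n - 1), Γ.dist xₙ y ≤ 1) :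
    IsCliquePath Γ 1 n
      (fun i => if i = 0 then {x₀} else if i = n then {xₙ} else σ i) := by
  have hc : Γ.Connected := hΓ.1
  obtain ⟨E1, E2⟩ := lemmaE hΓ n hn σ hσ x₀ hx₀ hx₀b
  have hσ' : IsLocalCliquePath Γ 1 n (fun k => σ (n - k)) := isLocalCliquePath_reverse hσ
  obtain ⟨E1', -⟩ := lemmaE hΓ n hn _ hσ' xₙ
    (show xₙ ∈ σ (n - 0) by rw [Nat.sub_zero]; exact hxₙ) hxₙb
  have dxn : Γ.dist x₀ xₙ = n := E2 xₙ hxₙ hxₙb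
  have dn : ∀ i, 1 ≤ i → i + 1 ≤ n → ∀ y ∈ σ i, Γ.dist xₙ y = n - i := by
    intro i h1 h2 y hy
    have hy' : y ∈ σ (n - (n - i)) := by rw [show n - (n - i) = i by omega]; exact hy
    exact E1' (n - i) (by omega) (by omega) y hy'
  -- interior lower bounds
  have Dlow : ∀ i j, 1 ≤ i → i < j → j + 1 ≤ n → ∀ x ∈ σ i, ∀ y ∈ σ j,
      j - i ≤ Γ.dist x y := by
    intro i j h1 hij h2 x hx y hy
    obtain ⟨u, hu, hu'⟩ := (lcp_consec hσ hn (i := i - 1) (by omega)).2.1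
    have hδ : IsLocalCliquePath Γ 1 (j - i + 2) (fun k => σ (i - 1 + k)) :=
      isLocalCliquePath_shift hσ (by omega : (i - 1) + (j - i + 2) ≤ n)
    obtain ⟨F1, -⟩ := lemmaE hΓ (j - i + 2) (by omega) _ hδ u hu
      (fun y hy => le_of_eq (hu' y hy))
    have a1 : Γ.dist u y = j - i + 1 := by
      have hy' : y ∈ σ (i - 1 + (j - i + 1)) := by
        rw [show i - 1 + (j - i + 1) = j by omega]; exact hy
      exact F1 (j - i + 1) (by omega) (by omega) y hy'
    have hx2 : x ∈ σ (i - 1 + 1) := by rw [show i - 1 + 1 = i by omega]; exact hx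
    have a2 : Γ.dist u x = 1 := F1 1 (by omega) (by omega) x hx2
    have tri : Γ.dist u y ≤ Γ.dist u x + Γ.dist x y := hc.dist_triangle
    omega
  have Dmid : ∀ i j, 1 ≤ i → i < j → j + 1 ≤ n →
      ∃ x ∈ σ i, ∀ y ∈ σ j, Γ.dist x y = j - i := by
    intro i j h1 hij h2
    obtain ⟨xi, hxi, hxi'⟩ := (lcp_consec hσ hn (i := i) (by omega)).2.1
    have hφ : IsLocalCliquePath Γ 1 (j - i + 1) (fun k => σ (i + k)) :=
      isLocalCliquePath_shift hσ (by omega : i + (j - i + 1) ≤ n)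
    obtain ⟨F1, -⟩ := lemmaE hΓ (j - i + 1) (by omega) _ hφ xi hxi
      (fun y hy => le_of_eq (hxi' y hy))
    refine ⟨xi, hxi, fun y hy => ?_⟩
    have hy' : y ∈ σ (i + (j - i)) := by rw [show i + (j - i) = j by omega]; exact hy
    exact F1 (j - i) (by omega) (by omega) y hy'
  have Dmid' : ∀ i j, 1 ≤ i → i < j → j + 1 ≤ n →
      ∃ y ∈ σ j, ∀ x ∈ σ i, Γ.dist x y = j - i := by
    intro i j h1 hij h2
    obtain ⟨yj, hyj, hyj'⟩ := (lcp_consec hσ hn (i := j - 1) (by omega)).2.2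
    have hyjj : yj ∈ σ j := by rw [show j = j - 1 + 1 by omega]; exact hyj
    have hb : (n - j) + (j - i + 1) ≤ n := by omega
    have hχ0 : IsLocalCliquePath Γ 1 (j - i + 1) (fun k => σ (n - (n - j + k))) :=
      isLocalCliquePath_shift hσ' hb
    have hχ : IsLocalCliquePath Γ 1 (j - i + 1) (fun k => σ (j - k)) :=
      isLocalCliquePath_congr
        (fun k hk => by rw [show n - (n - j + k) = j - k from by omega]) hχ0
    obtain ⟨F1, -⟩ := lemmaE hΓ (j - i + 1) (by omega) _ hχ yj
      (show yj ∈ σ (j - 0) by rw [Nat.sub_zero]; exact hyjj)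
      (fun y hy => by rw [Γ.dist_comm]; exact le_of_eq (hyj' y hy))
    refine ⟨yj, hyjj, fun x hx => ?_⟩
    have hx' : x ∈ σ (j - (j - i)) := by rw [show j - (j - i) = i by omega]; exact hx
    have := F1 (j - i) (by omega) (by omega) x hx'
    rw [Γ.dist_comm]; exact this
  set τ : ℕ → Set V := fun i => if i = 0 then {x₀} else if i = n then {xₙ} else σ i with hτdef
  have hτ0 : τ 0 = {x₀} := by simp [hτdef]
  have hτn : τ n = {xₙ} := by
    show (if n = 0 then ({x₀} : Set V) else if n = n then {xₙ} else σ n) = {xₙ}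
    rw [if_neg (show ¬ n = 0 by omega), if_pos rfl]
  have hτmid : ∀ k, 1 ≤ k → k + 1 ≤ n → τ k = σ k := by
    intro k h1 h2
    show (if k = 0 then ({x₀} : Set V) else if k = n then {xₙ} else σ k) = σ k
    rw [if_neg (show ¬ k = 0 by omega), if_neg (show ¬ k = n by omega)]
  have hτsub : ∀ k, τ k ⊆ σ k := by
    intro k
    by_cases h0 : k = 0
    · subst h0; rw [hτ0]; exact Set.singleton_subset_iff.mpr hx₀
    · by_cases hkn : k = n
      · subst hkn; rw [hτn]; exact Set.singleton_subset_iff.mpr hxₙ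
      · have : τ k = σ k := by
          show (if k = 0 then ({x₀} : Set V) else if k = n then {xₙ} else σ k) = σ k
          rw [if_neg h0, if_neg hkn]
        rw [this]
  have D : ∀ i j, i < j → j ≤ n → TransDist Γ (τ i) (τ j) (j - i) := by
    intro i j hij hjn
    by_cases hi0 : i = 0
    · subst hi0
      by_cases hjn' : j = n
      · subst hjn'
        rw [hτ0, hτn, Nat.sub_zero]
        refine ⟨fun x hx y hy => ?_, ⟨x₀, rfl, fun y hy => ?_⟩, ⟨xₙ, rfl, fun x hx => ?_⟩⟩
        · rw [Set.eq_of_mem_singleton hx, Set.eq_of_mem_singleton hy, dxn]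
        · rw [Set.eq_of_mem_singleton hy, dxn]
        · rw [Set.eq_of_mem_singleton hx, dxn]
      · have d0 := E1 j (by omega) (by omega)
        rw [hτ0, hτmid j (by omega) (by omega), Nat.sub_zero]
        obtain ⟨y0, hy0⟩ := (lcp_clique hσ hn (i := j) (by omega)).2
        refine ⟨fun x hx y hy => ?_, ⟨x₀, rfl, fun y hy => d0 y hy⟩,
          ⟨y0, hy0, fun x hx => ?_⟩⟩
        · rw [Set.eq_of_mem_singleton hx]; exact le_of_eq (d0 y hy).symm
        · rw [Set.eq_of_mem_singleton hx]; exact d0 y0 hy0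
    · by_cases hjn' : j = n
      · subst hjn'
        have dni := dn i (by omega) (by omega)
        rw [hτmid i (by omega) (by omega), hτn]
        obtain ⟨z0, hz0⟩ := (lcp_clique hσ hn (i := i) (by omega)).2
        refine ⟨fun x hx y hy => ?_, ⟨z0, hz0, fun y hy => ?_⟩, ⟨xₙ, rfl, fun x hx => ?_⟩⟩
        · rw [Set.eq_of_mem_singleton hy, Γ.dist_comm]
          exact le_of_eq (dni x hx).symm
        · rw [Set.eq_of_mem_singleton hy, Γ.dist_comm]; exact dni z0 hz0
        · rw [Γ.dist_comm]; exact dni x hx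
      · rw [hτmid i (by omega) (by omega), hτmid j (by omega) (by omega)]
        exact ⟨Dlow i j (by omega) hij (by omega),
          Dmid i j (by omega) hij (by omega), Dmid' i j (by omega) hij (by omega)⟩
  refine ⟨?_, ?_, ?_, ?_⟩
  · intro i hi
    by_cases h0 : i = 0
    · subst h0; rw [hτ0]; exact ⟨SimpleGraph.isClique_singleton _, ⟨x₀, rfl⟩⟩
    · by_cases hkn : i = n
      · subst hkn; rw [hτn]; exact ⟨SimpleGraph.isClique_singleton _, ⟨xₙ, rfl⟩⟩
      · rw [hτmid i (by omega) (by omega)]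
        exact lcp_clique hσ hn hi
  · intro i hi j hj hij
    rcases Nat.lt_or_ge i j with h | h
    · refine Set.disjoint_left.mpr fun z hz1 hz2 => ?_
      have := (D i j h hj).1 z hz1 z hz2
      rw [SimpleGraph.dist_self] at this; omega
    · refine (Set.disjoint_left.mpr fun z hz1 hz2 => ?_).symm
      have := (D j i (by omega) hi).1 z hz1 z hz2
      rw [SimpleGraph.dist_self] at this; omega
  · intro i j hij hjn
    rw [Nat.mul_one]
    exact D i j hij hjn
  · intro i h1 h2 ρ hρ hsub hl hr
    rw [hτmid i h1 h2] at hsub ⊢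
    have hL : ∃ c ∈ σ (i - 1), ∀ a ∈ ρ, Γ.dist a c = 1 := by
      obtain ⟨c, hcm, hc'⟩ := hl.2.2
      exact ⟨c, hτsub (i - 1) hcm, hc'⟩
    have hR : ∃ c ∈ σ (i + 1), ∀ a ∈ ρ, Γ.dist a c = 1 := by
      obtain ⟨c, hcm, hc'⟩ := hr.2.2
      exact ⟨c, hτsub (i + 1) hcm, hc'⟩
    have two_i : TransDist Γ (σ (i - 1)) (σ (i + 1)) 2 := by
      have h := lcp_two hσ (i := i - 1) (by omega)
      rwa [show i - 1 + 2 = i + 1 by omega] at h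
    have cons_l : TransDist Γ (σ (i - 1)) (σ i) 1 := by
      have h := lcp_consec hσ hn (i := i - 1) (by omega)
      rwa [show i - 1 + 1 = i by omega] at h
    have cons_r : TransDist Γ (σ i) (σ (i + 1)) 1 := lcp_consec hσ hn (by omega)
    have T_left : TransDist Γ ρ (σ (i - 1)) 1 := by
      obtain ⟨cR, hcR, hcR'⟩ := hR
      obtain ⟨u, hum, hu'⟩ := cons_l.2.2
      refine ⟨fun a ha b hb => ?_, ⟨u, hsub hum, fun b hb => ?_⟩, hL⟩
      · refine hc.pos_dist_of_ne fun h => ?_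
        have k1 := hcR' a ha
        have k2 := two_i.1 b hb cR hcR
        rw [h] at k1; omega
      · rw [Γ.dist_comm]; exact hu' b hb
    have T_right : TransDist Γ ρ (σ (i + 1)) 1 := by
      obtain ⟨cL, hcL, hcL'⟩ := hL
      obtain ⟨xi, hxim, hxi'⟩ := cons_r.2.1
      refine ⟨fun a ha b hb => ?_, ⟨xi, hsub hxim, hxi'⟩, hR⟩
      · refine hc.pos_dist_of_ne fun h => ?_
        have k1 := hcL' a ha
        have k2 := two_i.1 cL hcL b hb
        rw [h, Γ.dist_comm] at k1; omega
    exact lcp_max hσ (i := i) h1 h2 ρ hρ hsub T_left T_right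
end

section
/- Let X be a locally finite Helly graph, let L ≥ 1 and n ≥ 2 be integers, and let σ_0, …, σ_n be a local L-clique-path in X. Then there exist x_0 ∈ σ_0 and x_n ∈ σ_n such that σ_1 ⊆ B(x_0, L), σ_{n−1} ⊆ B(x_n, L), and the sequence {x_0}, σ_1, σ_2, …, σ_{n−1}, {x_n} is an L-clique-path. -/
open SimpleGraph Pointwise

namespace LCPAux

variable {V : Type*} {Γ : SimpleGraph V}

lemma dist_mid (hc : Γ.Connected) :
    ∀ (a : ℕ) (x z : V) (b : ℕ), Γ.dist x z ≤ a + b →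
      ∃ y : V, Γ.dist x y ≤ a ∧ Γ.dist y z ≤ b := by
  intro a
  induction a with
  | zero =>
    intro x z b h
    exact ⟨x, by simp [SimpleGraph.dist_self], by simpa using h⟩
  | succ a ih =>
    intro x z b h
    by_cases h0 : Γ.dist x z ≤ b
    · exact ⟨x, by simp [SimpleGraph.dist_self], h0⟩
    · obtain ⟨w, hw⟩ := (hc.preconnected x z).exists_walk_length_eq_dist
      cases w with
      | nil =>
        exfalso
        exact h0 (by simp [SimpleGraph.dist_self])
      | cons hadj p =>
        rename_i x'
        have hlen : p.length + 1 = Γ.dist x z := by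
          simpa [SimpleGraph.Walk.length_cons] using hw
        have hx'z : Γ.dist x' z ≤ a + b := by
          have := SimpleGraph.dist_le p
          omega
        obtain ⟨y, hy1, hy2⟩ := ih x' z b hx'z
        refine ⟨y, ?_, hy2⟩
        have t1 : Γ.dist x y ≤ Γ.dist x x' + Γ.dist x' y := hc.dist_triangle
        have t2 : Γ.dist x x' = 1 := SimpleGraph.dist_eq_one_iff_adj.mpr hadj
        omega


structure Ctx {V : Type*} (Γ : SimpleGraph V) (L n : ℕ) (σ : ℕ → Set V) : Prop where
  conn : Γ.Connected
  helly : ∀ S : Set (V × ℕ),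
      (∀ p ∈ S, ∀ q ∈ S, ∃ y : V, Γ.dist p.1 y ≤ p.2 ∧ Γ.dist q.1 y ≤ q.2) →
      ∃ y : V, ∀ p ∈ S, Γ.dist p.1 y ≤ p.2
  hL : 1 ≤ L
  hn : 2 ≤ n
  cl : ∀ i, i ≤ n → Γ.IsClique (σ i)
  nonemp : ∀ i, i ≤ n → (σ i).Nonempty
  low1 : ∀ i, i + 1 ≤ n → ∀ x ∈ σ i, ∀ y ∈ σ (i+1), L ≤ Γ.dist x y
  low2 : ∀ i, i + 2 ≤ n → ∀ x ∈ σ i, ∀ y ∈ σ (i+2), 2 * L ≤ Γ.dist x y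
  rf : ∀ i, i + 1 ≤ n → ∃ x ∈ σ i, ∀ y ∈ σ (i+1), Γ.dist x y = L
  rb : ∀ i, i + 1 ≤ n → ∃ z ∈ σ (i+1), ∀ y ∈ σ i, Γ.dist y z = L
  max : ∀ i, i + 2 ≤ n → ∀ ρ : Set V, Γ.IsClique ρ → σ (i+1) ⊆ ρ →
      TransDist Γ ρ (σ i) L → TransDist Γ ρ (σ (i+2)) L → ρ = σ (i+1)


variable {L n : ℕ} {σ : ℕ → Set V}

lemma Ctx.cliqdist (C : Ctx Γ L n σ) {j : ℕ} (hj : j ≤ n) {a b : V}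
    (ha : a ∈ σ j) (hb : b ∈ σ j) : Γ.dist a b ≤ 1 := by
  by_cases hab : a = b
  · simp [hab, SimpleGraph.dist_self]
  · exact le_of_eq (SimpleGraph.dist_eq_one_iff_adj.mpr (C.cl j hj ha hb hab))

lemma Ctx.Ufwd (C : Ctx Γ L n σ) :
    ∀ t, 1 ≤ t → ∀ i x, i + t ≤ n → (∀ u ∈ σ (i+1), Γ.dist x u ≤ L) →
      ∀ y ∈ σ (i+t), Γ.dist x y ≤ t * L := by
  refine Nat.le_induction ?_ ?_
  · intro i x hin hx y hy
    simpa using hx y hy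
  · intro t ht IH i x hin hx y hy
    obtain ⟨w, hwσ, hwr⟩ := C.rf (i+1) (by omega)
    have h2 : ∀ y' ∈ σ ((i+1) + t), Γ.dist w y' ≤ t * L := by
      refine IH (i+1) w (by omega) ?_
      intro u hu
      exact (hwr u hu).le
    have hy' : y ∈ σ ((i+1) + t) := by
      have e : (i+1) + t = i + (t+1) := by omega
      rw [e]; exact hy
    have t1 : Γ.dist x y ≤ Γ.dist x w + Γ.dist w y := C.conn.dist_triangle
    have t2 : Γ.dist x w ≤ L := hx w hwσ
    have t3 : Γ.dist w y ≤ t * L := h2 y hy'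
    have e : (t+1) * L = t * L + L := by ring
    omega

lemma Ctx.Ubwd (C : Ctx Γ L n σ) :
    ∀ t, 1 ≤ t → ∀ i z, i + t ≤ n → (∀ u ∈ σ (i + t - 1), Γ.dist u z ≤ L) →
      ∀ y ∈ σ i, Γ.dist y z ≤ t * L := by
  refine Nat.le_induction ?_ ?_
  · intro i z hin hz y hy
    have e : i + 1 - 1 = i := by omega
    rw [e] at hz
    simpa using hz y hy
  · intro t ht IH i z hin hz y hy
    have e : i + (t+1) - 1 = i + t := by omega
    rw [e] at hz
    obtain ⟨p, hpσ, hpr⟩ := C.rb (i + t - 1) (by omega)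
    have e2 : i + t - 1 + 1 = i + t := by omega
    rw [e2] at hpσ
    have hpz : Γ.dist p z ≤ L := hz p hpσ
    have h2 : ∀ y' ∈ σ i, Γ.dist y' p ≤ t * L := by
      refine IH i p (by omega) ?_
      intro u hu
      exact (hpr u hu).le
    have t1 : Γ.dist y z ≤ Γ.dist y p + Γ.dist p z := C.conn.dist_triangle
    have t2 : Γ.dist y p ≤ t * L := h2 y hy
    have e3 : (t+1) * L = t * L + L := by ring
    omega

lemma Ctx.keyLem (C : Ctx Γ L n σ) {i : ℕ} (h2 : i + 2 ≤ n)
    {x : V} (hxσ : x ∈ σ i) (hxr : ∀ u ∈ σ (i+1), Γ.dist x u = L)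
    {v : V} (hv1 : ∀ u ∈ σ (i+1), Γ.dist v u ≤ 1) (hvx : Γ.dist x v ≤ L)
    (hv2 : ∀ w ∈ σ (i+2), Γ.dist v w ≤ L) : v ∈ σ (i+1) := by
  obtain ⟨w₀, hw₀⟩ := C.nonemp (i+2) (by omega)
  have hva : ∀ y ∈ σ i, L ≤ Γ.dist v y := by
    intro y hy
    have t1 : 2*L ≤ Γ.dist y w₀ := C.low2 i h2 y hy w₀ hw₀
    have t2 : Γ.dist y w₀ ≤ Γ.dist y v + Γ.dist v w₀ := C.conn.dist_triangle
    have t3 : Γ.dist v w₀ ≤ L := hv2 w₀ hw₀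
    have t4 : Γ.dist v y = Γ.dist y v := SimpleGraph.dist_comm
    omega
  have hvb : ∀ w ∈ σ (i+2), L ≤ Γ.dist v w := by
    intro w hw
    have t1 : 2*L ≤ Γ.dist x w := C.low2 i h2 x hxσ w hw
    have t2 : Γ.dist x w ≤ Γ.dist x v + Γ.dist v w := C.conn.dist_triangle
    omega
  have hclρ : Γ.IsClique (insert v (σ (i+1))) := by
    refine (C.cl (i+1) (by omega)).insert ?_
    intro b hb hne
    have t1 := hv1 b hb
    have t2 : Γ.dist v b ≠ 0 := by
      rw [ne_eq, C.conn.dist_eq_zero_iff]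
      exact hne
    have : Γ.dist v b = 1 := by omega
    exact SimpleGraph.dist_eq_one_iff_adj.mp this
  have hT1 : TransDist Γ (insert v (σ (i+1))) (σ i) L := by
    refine ⟨?_, ?_, ?_⟩
    · intro p hp y hy
      rcases Set.mem_insert_iff.mp hp with rfl | hp'
      · exact hva y hy
      · have := C.low1 i (by omega) y hy p hp'
        rwa [SimpleGraph.dist_comm] at this
    · obtain ⟨zr, hzσ, hzr⟩ := C.rb i (by omega)
      exact ⟨zr, Set.mem_insert_of_mem _ hzσ,
        fun y hy => by rw [SimpleGraph.dist_comm]; exact hzr y hy⟩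
    · refine ⟨x, hxσ, ?_⟩
      intro p hp
      rcases Set.mem_insert_iff.mp hp with rfl | hp'
      · have h1 : Γ.dist p x ≤ L := by rwa [SimpleGraph.dist_comm] at hvx
        have h1' : L ≤ Γ.dist p x := by
          have := hva x hxσ
          exact this
        omega
      · rw [SimpleGraph.dist_comm]; exact hxr p hp'
  have hT2 : TransDist Γ (insert v (σ (i+1))) (σ (i+2)) L := by
    refine ⟨?_, ?_, ?_⟩
    · intro p hp w hw
      rcases Set.mem_insert_iff.mp hp with rfl | hp'
      · exact hvb w hw
      · have e : i + 1 + 1 = i + 2 := by omega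
        have := C.low1 (i+1) (by omega) p hp'
        rw [e] at this
        exact this w hw
    · obtain ⟨xr, hxrσ, hxrr⟩ := C.rf (i+1) (by omega)
      have e : i + 1 + 1 = i + 2 := by omega
      rw [e] at hxrr
      exact ⟨xr, Set.mem_insert_of_mem _ hxrσ, hxrr⟩
    · obtain ⟨y2, hy2σ, hy2r⟩ := C.rb (i+1) (by omega)
      have e : i + 1 + 1 = i + 2 := by omega
      rw [e] at hy2σ
      refine ⟨y2, hy2σ, ?_⟩
      intro p hp
      rcases Set.mem_insert_iff.mp hp with rfl | hp'
      · have h1 : Γ.dist p y2 ≤ L := hv2 y2 hy2σ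
        have h2' : L ≤ Γ.dist p y2 := hvb y2 hy2σ
        omega
      · exact hy2r p hp'
  have hmax := C.max i h2 _ hclρ (Set.subset_insert _ _) hT1 hT2
  rw [← hmax]
  exact Set.mem_insert _ _


lemma Ctx.Rb (C : Ctx Γ L n σ) :
    ∀ s, 1 ≤ s → ∀ i, i + s ≤ n → ∀ x ∈ σ i, (∀ u ∈ σ (i+1), Γ.dist x u = L) →
      ∀ z ∈ σ (i+s), (∀ u ∈ σ (i+s-1), Γ.dist u z = L) → s * L ≤ Γ.dist x z := by
  intro s
  induction s using Nat.strong_induction_on with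
  | _ s IH =>
  intro hs i hin x hxσ hxr z hzσ hzr
  rcases eq_or_lt_of_le hs with h1 | hs2
  · -- s = 1
    have e : i + s = i + 1 := by omega
    rw [e] at hzσ
    have := hxr z hzσ
    have e2 : s * L = L := by rw [← h1]; ring
    omega
  · rcases eq_or_lt_of_le (by omega : 2 ≤ s) with h2 | hs3
    · -- s = 2
      have e : i + s = i + 2 := by omega
      rw [e] at hzσ
      have := C.low2 i (by omega) x hxσ z hzσ
      have e2 : s * L = 2 * L := by rw [← h2]
      omega
    · -- 3 ≤ s
      have hs3' : 3 ≤ s := hs3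
      by_contra hcon
      push_neg at hcon
      have hi2 : i + 2 ≤ n := by omega
      -- forward realizer in σ(i+1) towards σ(i+2)
      obtain ⟨wf, hwfσ, hwfr⟩ := C.rf (i+1) (by omega)
      have e12 : i + 1 + 1 = i + 2 := by omega
      rw [e12] at hwfr
      -- arithmetic atoms
      have eA : (s-1) * L = (s-2) * L + L := by
        have e : s - 1 = (s-2) + 1 := by omega
        rw [e, add_mul, one_mul]
      have eB : s * L = (s-2) * L + L + L := by
        have e : s = (s-2) + 1 + 1 := by omega
        conv_lhs => rw [e]
        rw [add_mul, add_mul, one_mul]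
      -- distances to z
      have dzu : ∀ u ∈ σ (i+1), Γ.dist u z ≤ (s-1) * L := by
        have e : i + 1 + (s-1) - 1 = i + s - 1 := by omega
        refine C.Ubwd (s-1) (by omega) (i+1) z (by omega) ?_
        rw [e]
        intro u hu
        exact (hzr u hu).le
      have dzw : ∀ w ∈ σ (i+2), Γ.dist w z ≤ (s-2) * L := by
        have e : i + 2 + (s-2) - 1 = i + s - 1 := by omega
        refine C.Ubwd (s-2) (by omega) (i+2) z (by omega) ?_
        rw [e]
        intro u hu
        exact (hzr u hu).le
      have dxwf : Γ.dist x wf = L := hxr wf hwfσ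
      have dxw : ∀ w ∈ σ (i+2), Γ.dist x w ≤ L + L := by
        intro w hw
        have t1 : Γ.dist x w ≤ Γ.dist x wf + Γ.dist wf w := C.conn.dist_triangle
        have t2 := hwfr w hw
        omega
      have duw : ∀ u ∈ σ (i+1), ∀ w ∈ σ (i+2), Γ.dist u w ≤ 1 + L := by
        intro u hu w hw
        have t1 : Γ.dist u w ≤ Γ.dist u wf + Γ.dist wf w := C.conn.dist_triangle
        have t2 := C.cliqdist (by omega : i + 1 ≤ n) hu hwfσ
        have t3 := hwfr w hw
        omega
      -- the ball family
      set r : ℕ := (s-1) * L - 1 with hr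
      set S : Set (V × ℕ) :=
        ((fun u => (u, 1)) '' σ (i+1)) ∪ ((fun w => (w, L)) '' σ (i+2)) ∪ {(x, L), (z, r)}
        with hSdef
      have hmem : ∀ p ∈ S,
          (p.2 = 1 ∧ p.1 ∈ σ (i+1)) ∨ (p.2 = L ∧ p.1 ∈ σ (i+2)) ∨ p = (x, L) ∨ p = (z, r) := by
        intro p hp
        simp only [hSdef, Set.mem_union, Set.mem_image, Set.mem_insert_iff,
          Set.mem_singleton_iff] at hp
        rcases hp with (⟨u, hu, he⟩ | ⟨w, hw, he⟩) | (he | he)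
        · exact Or.inl ⟨by rw [← he], by rw [← he]; exact hu⟩
        · exact Or.inr (Or.inl ⟨by rw [← he], by rw [← he]; exact hw⟩)
        · exact Or.inr (Or.inr (Or.inl he))
        · exact Or.inr (Or.inr (Or.inr he))
      have hLr : 1 ≤ L := C.hL
      have hpair : ∀ p ∈ S, ∀ q ∈ S, Γ.dist p.1 q.1 ≤ p.2 + q.2 := by
        intro p hp q hq
        rcases hmem p hp with ⟨e1, m1⟩ | ⟨e1, m1⟩ | rfl | rfl <;>
          rcases hmem q hq with ⟨e2, m2⟩ | ⟨e2, m2⟩ | rfl | rfl <;>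
            simp only [] at *
        · have := C.cliqdist (by omega : i + 1 ≤ n) m1 m2; omega
        · have := duw _ m1 _ m2; omega
        · have := hxr _ m1; rw [SimpleGraph.dist_comm] at this; omega
        · have := dzu _ m1; omega
        · have := duw _ m2 _ m1; rw [SimpleGraph.dist_comm] at this; omega
        · have := C.cliqdist (by omega : i + 2 ≤ n) m1 m2; omega
        · have := dxw _ m1; rw [SimpleGraph.dist_comm] at this; omega
        · have := dzw _ m1; omega
        · have := hxr _ m2; omega
        · have := dxw _ m2; omega
        · have : Γ.dist x x = 0 := SimpleGraph.dist_self; omega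
        · omega
        · have := dzu _ m2; rw [SimpleGraph.dist_comm] at this; omega
        · have := dzw _ m2; rw [SimpleGraph.dist_comm] at this; omega
        · rw [SimpleGraph.dist_comm]; omega
        · have : Γ.dist z z = 0 := SimpleGraph.dist_self; omega
      obtain ⟨v, hv⟩ := by
        refine C.helly S ?_
        intro p hp q hq
        obtain ⟨y, hy1, hy2⟩ := dist_mid C.conn p.2 p.1 q.1 q.2 (hpair p hp q hq)
        exact ⟨y, hy1, by rwa [SimpleGraph.dist_comm] at hy2⟩
      have hv1 : ∀ u ∈ σ (i+1), Γ.dist v u ≤ 1 := by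
        intro u hu
        have := hv (u, 1)
          (Set.mem_union_left _ (Set.mem_union_left _ ⟨u, hu, rfl⟩))
        rwa [SimpleGraph.dist_comm] at this
      have hvw : ∀ w ∈ σ (i+2), Γ.dist v w ≤ L := by
        intro w hw
        have := hv (w, L)
          (Set.mem_union_left _ (Set.mem_union_right _ ⟨w, hw, rfl⟩))
        rwa [SimpleGraph.dist_comm] at this
      have hvx : Γ.dist x v ≤ L :=
        hv (x, L) (Set.mem_union_right _ (Set.mem_insert _ _))
      have hvz : Γ.dist z v ≤ r :=
        hv (z, r) (Set.mem_union_right _ (Set.mem_insert_of_mem _ rfl))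
      -- v lies in σ (i+1)
      have hvσ : v ∈ σ (i+1) := C.keyLem hi2 hxσ hxr hv1 hvx hvw
      -- v is a forward realizer towards σ (i+2)
      have hvreal : ∀ w ∈ σ (i+1+1), Γ.dist v w = L := by
        intro w hw
        rw [e12] at hw
        have h1 := hvw w hw
        have h2 := C.low1 (i+1) (by omega) v hvσ w (by rw [e12]; exact hw)
        omega
      -- apply the induction hypothesis to (v, z)
      have hIH := IH (s-1) (by omega) (by omega) (i+1) (by omega) v hvσ hvreal
      have e3 : i + 1 + (s-1) = i + s := by omega
      rw [e3] at hIH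
      have := hIH z hzσ hzr
      have hc2 : Γ.dist v z = Γ.dist z v := SimpleGraph.dist_comm
      omega


end LCPAux

/-- Local `L`-clique-paths give global `L`-clique-paths between suitable vertices,
in a locally finite Helly graph. -/
theorem local_clique_path_between_vertices_L {V : Type*} (Γ : SimpleGraph V)
    (hΓ : IsHellyGraph Γ) (hlf : ∀ v : V, (Γ.neighborSet v).Finite)
    (L n : ℕ) (hL : 1 ≤ L) (hn : 2 ≤ n)
    (σ : ℕ → Set V) (hσ : IsLocalCliquePath Γ L n σ) :
    ∃ x₀ ∈ σ 0, ∃ xₙ ∈ σ n,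
      (∀ y ∈ σ 1, Γ.dist x₀ y ≤ L) ∧ (∀ y ∈ σ (n - 1), Γ.dist xₙ y ≤ L) ∧
      IsCliquePath Γ L n
        (fun i => if i = 0 then {x₀} else if i = n then {xₙ} else σ i) := by
  
  obtain ⟨hconn, hH⟩ := hΓ
  -- transverse distances at spans ≤ 2, extracted from the local hypothesis
  have pairTD : ∀ i j, i < j → j ≤ i + 2 → j ≤ n →
      TransDist Γ (σ i) (σ j) ((j - i) * L) := by
    intro i j hij hj2 hjn
    have hm : ∃ m, m + 2 ≤ n ∧ m ≤ i ∧ j ≤ m + 2 := by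
      rcases le_or_gt (i+2) n with h | h
      · exact ⟨i, by omega, le_rfl, by omega⟩
      · exact ⟨n - 2, by omega, by omega, by omega⟩
    obtain ⟨m, hm1, hm2, hm3⟩ := hm
    have htd := (hσ m hm1).2.2.1 (i - m) (j - m) (by omega) (by omega)
    simp only [] at htd
    have e1 : m + (i - m) = i := by omega
    have e2 : m + (j - m) = j := by omega
    have e3 : j - m - (i - m) = j - i := by omega
    rw [e1, e2, e3] at htd
    exact htd
  have hclne : ∀ i, i ≤ n → Γ.IsClique (σ i) ∧ (σ i).Nonempty := by
    intro i hi
    have hm : ∃ m k, k ≤ 2 ∧ m + 2 ≤ n ∧ m + k = i := by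
      rcases le_or_gt (i+2) n with h | h
      · exact ⟨i, 0, by omega, by omega, by omega⟩
      · exact ⟨n-2, i - (n-2), by omega, by omega, by omega⟩
    obtain ⟨m, k, hk, hm1, hmk⟩ := hm
    have h1 := (hσ m hm1).1 k hk
    simp only [] at h1
    rw [hmk] at h1
    exact h1
  have hmaxE : ∀ i, i + 2 ≤ n → ∀ ρ : Set V, Γ.IsClique ρ → σ (i+1) ⊆ ρ →
      TransDist Γ ρ (σ i) L → TransDist Γ ρ (σ (i+2)) L → ρ = σ (i+1) := by
    intro i h2 ρ hcl hsub hT1 hT2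
    have h := (hσ i h2).2.2.2 1 le_rfl (by omega) ρ hcl
      (by simpa using hsub) (by simpa using hT1) (by simpa using hT2)
    simpa using h
  have C : LCPAux.Ctx Γ L n σ :=
    { conn := hconn, helly := hH, hL := hL, hn := hn,
      cl := fun i hi => (hclne i hi).1,
      nonemp := fun i hi => (hclne i hi).2,
      low1 := by
        intro i h x hx y hy
        have := (pairTD i (i+1) (by omega) (by omega) h).1 x hx y hy
        simpa using this,
      low2 := by
        intro i h x hx y hy
        have := (pairTD i (i+2) (by omega) (by omega) h).1 x hx y hy
        simpa using this,
      rf := by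
        intro i h
        obtain ⟨x, hx, hr⟩ := (pairTD i (i+1) (by omega) (by omega) h).2.1
        exact ⟨x, hx, fun y hy => by simpa using hr y hy⟩,
      rb := by
        intro i h
        obtain ⟨z, hz, hr⟩ := (pairTD i (i+1) (by omega) (by omega) h).2.2
        exact ⟨z, hz, fun y hy => by simpa using hr y hy⟩,
      max := hmaxE }
  -- the endpoints
  obtain ⟨x₀, hx₀σ, hx₀r0⟩ := C.rf 0 (by omega)
  have hx₀r : ∀ y ∈ σ 1, Γ.dist x₀ y = L := by
    intro y hy
    exact hx₀r0 y (by simpa using hy)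
  obtain ⟨xN, hxNσ0, hxNr⟩ := C.rb (n-1) (by omega)
  have eN : n - 1 + 1 = n := by omega
  rw [eN] at hxNσ0
  have T0 : ∀ m, m = 0 → (if m = 0 then ({x₀} : Set V) else if m = n then {xN} else σ m) = {x₀} := by
    intro m hm
    simp [hm]
  have TN : ∀ m, m = n → (if m = 0 then ({x₀} : Set V) else if m = n then {xN} else σ m) = {xN} := by
    intro m hm
    rw [hm]
    simp [show n ≠ 0 by omega]
  have TI : ∀ m, m ≠ 0 → m ≠ n →
      (if m = 0 then ({x₀} : Set V) else if m = n then {xN} else σ m) = σ m := by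
    intro m h1 h2
    simp [h1, h2]
  -- upper bounds from x₀
  have F1 : ∀ j, 1 ≤ j → j ≤ n → ∀ z ∈ σ j, Γ.dist x₀ z ≤ j * L := by
    intro j h1 h2 z hz
    refine C.Ufwd j h1 0 x₀ (by omega) ?_ z (by simpa using hz)
    intro u hu
    exact (hx₀r u (by simpa using hu)).le
  -- lower bounds from x₀
  have F2 : ∀ j, 1 ≤ j → j + 1 ≤ n → ∀ z ∈ σ j, j * L ≤ Γ.dist x₀ z := by
    intro j h1 h2 z hz
    obtain ⟨zz, hzzσ, hzzr⟩ := C.rb j (by omega)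
    have hRb := C.Rb (j+1) (by omega) 0 (by omega) x₀ hx₀σ
      (fun u hu => hx₀r u (by simpa using hu)) zz (by simpa using hzzσ)
      (by
        intro u hu
        have e : 0 + (j + 1) - 1 = j := by omega
        rw [e] at hu
        exact hzzr u hu)
    have t1 : Γ.dist x₀ zz ≤ Γ.dist x₀ z + Γ.dist z zz := hconn.dist_triangle
    have t2 : Γ.dist z zz = L := hzzr z hz
    have e : (j+1) * L = j * L + L := by rw [add_mul, one_mul]
    omega
  have Ex0 : ∀ j, 1 ≤ j → j + 1 ≤ n → ∀ z ∈ σ j, Γ.dist x₀ z = j * L := by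
    intro j h1 h2 z hz
    exact le_antisymm (F1 j h1 (by omega) z hz) (F2 j h1 h2 z hz)
  -- distance between the endpoints
  have F3 : n * L ≤ Γ.dist x₀ xN := by
    refine C.Rb n (by omega) 0 (by omega) x₀ hx₀σ
      (fun u hu => hx₀r u (by simpa using hu)) xN (by simpa using hxNσ0) ?_
    intro u hu
    have e : 0 + n - 1 = n - 1 := by omega
    rw [e] at hu
    exact hxNr u hu
  have F4 : Γ.dist x₀ xN ≤ n * L := by
    obtain ⟨p, hp⟩ := C.nonemp (n-1) (by omega)
    have t1 : Γ.dist x₀ p ≤ (n-1) * L := F1 (n-1) (by omega) (by omega) p hp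
    have t2 : Γ.dist p xN = L := hxNr p hp
    have t3 : Γ.dist x₀ xN ≤ Γ.dist x₀ p + Γ.dist p xN := hconn.dist_triangle
    have e : n * L = (n-1) * L + L := by
      have e0 : n = (n-1) + 1 := by omega
      conv_lhs => rw [e0]
      rw [add_mul, one_mul]
    omega
  -- bounds towards xN
  have G1 : ∀ j, 1 ≤ j → j ≤ n - 1 → ∀ x ∈ σ j, Γ.dist x xN ≤ (n-j) * L := by
    intro j h1 h2 x hx
    refine C.Ubwd (n-j) (by omega) j xN (by omega) ?_ x hx
    intro u hu
    have e : j + (n - j) - 1 = n - 1 := by omega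
    rw [e] at hu
    exact (hxNr u hu).le
  have G2 : ∀ j, 1 ≤ j → j ≤ n - 1 → ∀ x ∈ σ j, (n-j) * L ≤ Γ.dist x xN := by
    intro j h1 h2 x hx
    obtain ⟨xm, hxmσ, hxmr⟩ := C.rf (j-1) (by omega)
    have ej : j - 1 + 1 = j := by omega
    have hRb := C.Rb (n-(j-1)) (by omega) (j-1) (by omega) xm hxmσ
      (fun u hu => hxmr u hu)
      xN (by
        have e : j - 1 + (n - (j-1)) = n := by omega
        rw [e]
        exact hxNσ0)
      (by
        intro u hu
        have e : j - 1 + (n - (j-1)) - 1 = n - 1 := by omega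
        rw [e] at hu
        exact hxNr u hu)
    have t1 : Γ.dist xm xN ≤ Γ.dist xm x + Γ.dist x xN := hconn.dist_triangle
    have t2 : Γ.dist xm x = L := hxmr x (by rw [ej]; exact hx)
    have e : (n-(j-1)) * L = (n-j) * L + L := by
      have e0 : n - (j-1) = (n-j) + 1 := by omega
      rw [e0, add_mul, one_mul]
    omega
  have ExN : ∀ j, 1 ≤ j → j ≤ n - 1 → ∀ x ∈ σ j, Γ.dist x xN = (n-j) * L := by
    intro j h1 h2 x hx
    exact le_antisymm (G1 j h1 h2 x hx) (G2 j h1 h2 x hx)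
  -- interior lower bounds
  have H1 : ∀ i j, 1 ≤ i → i < j → j + 1 ≤ n → ∀ x ∈ σ i, ∀ z ∈ σ j,
      (j-i) * L ≤ Γ.dist x z := by
    intro i j h1 hij h2 x hx z hz
    obtain ⟨xm, hxmσ, hxmr⟩ := C.rf (i-1) (by omega)
    have ei : i - 1 + 1 = i := by omega
    obtain ⟨zz, hzzσ, hzzr⟩ := C.rb j (by omega)
    have hRb := C.Rb (j+1-(i-1)) (by omega) (i-1) (by omega) xm hxmσ
      (fun u hu => hxmr u hu)
      zz (by
        have e : i - 1 + (j + 1 - (i-1)) = j + 1 := by omega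
        rw [e]
        exact hzzσ)
      (by
        intro u hu
        have e : i - 1 + (j + 1 - (i-1)) - 1 = j := by omega
        rw [e] at hu
        exact hzzr u hu)
    have t1 : Γ.dist xm zz ≤ Γ.dist xm x + Γ.dist x zz := hconn.dist_triangle
    have t2 : Γ.dist x zz ≤ Γ.dist x z + Γ.dist z zz := hconn.dist_triangle
    have t3 : Γ.dist xm x = L := hxmr x (by rw [ei]; exact hx)
    have t4 : Γ.dist z zz = L := hzzr z hz
    have e : (j+1-(i-1)) * L = (j-i) * L + L + L := by
      have e0 : j + 1 - (i-1) = (j-i) + 1 + 1 := by omega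
      rw [e0, add_mul, add_mul, one_mul]
    omega
  -- interior realizers
  have H2 : ∀ i j, 1 ≤ i → i < j → j + 1 ≤ n →
      ∃ p ∈ σ i, ∀ z ∈ σ j, Γ.dist p z = (j-i) * L := by
    intro i j h1 hij h2
    obtain ⟨p, hp, hpr⟩ := C.rf i (by omega)
    refine ⟨p, hp, fun z hz => ?_⟩
    have up : Γ.dist p z ≤ (j-i) * L := by
      refine C.Ufwd (j-i) (by omega) i p (by omega) (fun u hu => (hpr u hu).le) z ?_
      have e : i + (j - i) = j := by omega
      rw [e]
      exact hz
    exact le_antisymm up (H1 i j h1 hij h2 p hp z hz)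
  have H3 : ∀ i j, 1 ≤ i → i < j → j + 1 ≤ n →
      ∃ q ∈ σ j, ∀ x ∈ σ i, Γ.dist x q = (j-i) * L := by
    intro i j h1 hij h2
    obtain ⟨q, hq, hqr⟩ := C.rb (j-1) (by omega)
    have ej : j - 1 + 1 = j := by omega
    rw [ej] at hq
    refine ⟨q, hq, fun x hx => ?_⟩
    have up : Γ.dist x q ≤ (j-i) * L := by
      refine C.Ubwd (j-i) (by omega) i q (by omega) ?_ x hx
      intro u hu
      have e : i + (j - i) - 1 = j - 1 := by omega
      rw [e] at hu
      exact (hqr u hu).le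
    exact le_antisymm up (H1 i j h1 hij h2 x hx q hq)
  -- THE trans-distance statement for the new sequence
  have key3 : ∀ i j, i < j → j ≤ n →
      TransDist Γ (if i = 0 then {x₀} else if i = n then {xN} else σ i)
        (if j = 0 then {x₀} else if j = n then {xN} else σ j) ((j - i) * L) := by
    intro i j hij hjn
    have hj0 : j ≠ 0 := by omega
    by_cases hi0 : i = 0
    · subst hi0
      rw [T0 0 rfl, Nat.sub_zero]
      by_cases hjn' : j = n
      · rw [TN j hjn', hjn']
        have hd : Γ.dist x₀ xN = n * L := le_antisymm F4 F3
        refine ⟨?_, ⟨x₀, Set.mem_singleton _, ?_⟩, ⟨xN, Set.mem_singleton _, ?_⟩⟩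
        · intro a ha b hb
          rw [Set.mem_singleton_iff] at ha hb
          subst ha; subst hb
          omega
        · intro b hb
          rw [Set.mem_singleton_iff] at hb
          subst hb
          exact hd
        · intro a ha
          rw [Set.mem_singleton_iff] at ha
          subst ha
          exact hd
      · rw [TI j hj0 hjn']
        have h2 : j + 1 ≤ n := by omega
        obtain ⟨z0, hz0⟩ := C.nonemp j (by omega)
        refine ⟨?_, ⟨x₀, Set.mem_singleton _, ?_⟩, ⟨z0, hz0, ?_⟩⟩
        · intro a ha z hz
          rw [Set.mem_singleton_iff] at ha
          subst ha
          exact (Ex0 j (by omega) h2 z hz).ge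
        · intro z hz
          exact Ex0 j (by omega) h2 z hz
        · intro a ha
          rw [Set.mem_singleton_iff] at ha
          subst ha
          exact Ex0 j (by omega) h2 z0 hz0
    · have hin' : i ≠ n := by omega
      rw [TI i hi0 hin']
      by_cases hjn' : j = n
      · rw [TN j hjn', hjn']
        obtain ⟨p0, hp0⟩ := C.nonemp i (by omega)
        refine ⟨?_, ⟨p0, hp0, ?_⟩, ⟨xN, Set.mem_singleton _, ?_⟩⟩
        · intro x hx b hb
          rw [Set.mem_singleton_iff] at hb
          subst hb
          exact (ExN i (by omega) (by omega) x hx).ge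
        · intro b hb
          rw [Set.mem_singleton_iff] at hb
          subst hb
          exact ExN i (by omega) (by omega) p0 hp0
        · intro x hx
          exact ExN i (by omega) (by omega) x hx
      · rw [TI j hj0 hjn']
        have h2 : j + 1 ≤ n := by omega
        obtain ⟨p, hp, hpr⟩ := H2 i j (by omega) hij h2
        obtain ⟨q, hq, hqr⟩ := H3 i j (by omega) hij h2
        exact ⟨fun x hx z hz => H1 i j (by omega) hij h2 x hx z hz,
          ⟨p, hp, hpr⟩, ⟨q, hq, hqr⟩⟩
  refine ⟨x₀, hx₀σ, xN, hxNσ0, ?_, ?_, ?_, ?_, ?_, ?_⟩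
  · intro y hy
    exact (hx₀r y hy).le
  · intro y hy
    have := hxNr y hy
    rw [SimpleGraph.dist_comm] at this
    exact this.le
  -- cliques and nonemptiness
  · intro i hi
    by_cases h0 : i = 0
    · simp only [T0 i h0]
      exact ⟨SimpleGraph.isClique_singleton _, Set.singleton_nonempty _⟩
    · by_cases hn' : i = n
      · simp only [TN i hn']
        exact ⟨SimpleGraph.isClique_singleton _, Set.singleton_nonempty _⟩
      · simp only [TI i h0 hn']
        exact hclne i hi
  -- disjointness
  · have main : ∀ a b, a < b → b ≤ n →
        Disjoint (if a = 0 then ({x₀} : Set V) else if a = n then {xN} else σ a)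
          (if b = 0 then ({x₀} : Set V) else if b = n then {xN} else σ b) := by
      intro a b hab hbn
      have ht := key3 a b hab hbn
      rw [Set.disjoint_left]
      intro c hc hcb
      have h1 := ht.1 c hc c hcb
      have h2 : Γ.dist c c = 0 := SimpleGraph.dist_self
      have h3 : 1 ≤ (b - a) * L := by
        have := Nat.mul_le_mul (show 1 ≤ b - a by omega) hL
        simpa using this
      omega
    intro i hi j hj hij
    rcases lt_or_gt_of_ne hij with h | h
    · exact main i j h hj
    · exact (main j i h hi).symm
  -- transverse distances
  · intro i j hij hjn
    exact key3 i j hij hjn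
  -- maximality
  · intro i h1 hin ρ hρ hsub hTm hTp
    have hi0 : i ≠ 0 := by omega
    have hiN : i ≠ n := by omega
    simp only [if_neg hi0, if_neg hiN] at hsub ⊢
    by_cases hi1 : i = 1
    · subst hi1
      -- hTm is about {x₀}
      have hTm' : TransDist Γ ρ ({x₀} : Set V) L := hTm
      have hpx₀ : ∀ p ∈ ρ, Γ.dist p x₀ = L := by
        obtain ⟨y, hy, hr⟩ := hTm'.2.2
        rw [Set.mem_singleton_iff] at hy
        rw [hy] at hr
        exact hr
      -- get a suitable vertex of σ 2 at distance L from all of ρ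
      have hTp' : TransDist Γ ρ (if 1 + 1 = n then ({xN} : Set V) else σ 2) L := hTp
      have hw2 : ∃ w ∈ σ 2, ∀ p ∈ ρ, Γ.dist p w = L := by
        by_cases hn2 : n = 2
        · rw [hn2] at hTp'
          have hTp'' : TransDist Γ ρ ({xN} : Set V) L := hTp'
          obtain ⟨y, hy, hr⟩ := hTp''.2.2
          rw [Set.mem_singleton_iff] at hy
          rw [hy] at hr
          refine ⟨xN, ?_, hr⟩
          rw [hn2] at hxNσ0
          exact hxNσ0
        · rw [if_neg (show ¬(1 + 1 = n) by omega)] at hTp'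
          obtain ⟨y, hy, hr⟩ := hTp'.2.2
          exact ⟨y, hy, hr⟩
      obtain ⟨w2, hw2σ, hw2r⟩ := hw2
      -- TransDist ρ (σ 0) L
      have hT0 : TransDist Γ ρ (σ 0) L := by
        refine ⟨?_, ?_, ⟨x₀, hx₀σ, hpx₀⟩⟩
        · intro p hp y hy
          have t1 : 2 * L ≤ Γ.dist y w2 := by
            have := C.low2 0 (by omega) y hy w2 (by simpa using hw2σ)
            simpa using this
          have t2 : Γ.dist y w2 ≤ Γ.dist y p + Γ.dist p w2 := hconn.dist_triangle
          have t3 : Γ.dist p w2 = L := hw2r p hp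
          have t4 : Γ.dist y p = Γ.dist p y := SimpleGraph.dist_comm
          omega
        · obtain ⟨z1, hz1σ, hz1r⟩ := C.rb 0 (by omega)
          refine ⟨z1, hsub (by simpa using hz1σ), fun y hy => ?_⟩
          rw [SimpleGraph.dist_comm]
          exact hz1r y (by simpa using hy)
      -- TransDist ρ (σ 2) L
      have hT2 : TransDist Γ ρ (σ 2) L := by
        by_cases hn2 : n = 2
        · rw [hn2] at hTp'
          have hTp'' : TransDist Γ ρ ({xN} : Set V) L := hTp'
          have hpxN : ∀ p ∈ ρ, Γ.dist p xN = L := by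
            obtain ⟨y, hy, hr⟩ := hTp''.2.2
            rw [Set.mem_singleton_iff] at hy
            rw [hy] at hr
            exact hr
          have hxNσ2 : xN ∈ σ 2 := by rw [hn2] at hxNσ0; exact hxNσ0
          refine ⟨?_, ?_, ⟨xN, hxNσ2, hpxN⟩⟩
          · intro p hp w hw
            have t1 : 2 * L ≤ Γ.dist x₀ w := by
              have := C.low2 0 (by omega) x₀ hx₀σ w (by simpa using hw)
              simpa using this
            have t2 : Γ.dist x₀ w ≤ Γ.dist x₀ p + Γ.dist p w := hconn.dist_triangle
            have t3 : Γ.dist p x₀ = L := hpx₀ p hp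
            have t4 : Γ.dist x₀ p = Γ.dist p x₀ := SimpleGraph.dist_comm
            omega
          · obtain ⟨p1, hp1σ, hp1r⟩ := C.rf 1 (by omega)
            refine ⟨p1, hsub hp1σ, fun w hw => ?_⟩
            exact hp1r w (by simpa using hw)
        · rw [if_neg (show ¬(1 + 1 = n) by omega)] at hTp'
          exact hTp'
      have := hmaxE 0 (by omega) ρ hρ (by simpa using hsub) (by simpa using hT0)
        (by simpa using hT2)
      simpa using this
    · by_cases hiN1 : i = n - 1
      · -- i = n - 1, with n ≥ 3 here
        have hn3 : 3 ≤ n := by omega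
        -- hTp is about {xN}
        have hTp' : TransDist Γ ρ
            (if i + 1 = 0 then ({x₀} : Set V) else if i + 1 = n then {xN} else σ (i+1)) L := hTp
        rw [if_neg (show ¬(i + 1 = 0) by omega), if_pos (show i + 1 = n by omega)] at hTp'
        have hpxN : ∀ p ∈ ρ, Γ.dist p xN = L := by
          obtain ⟨y, hy, hr⟩ := hTp'.2.2
          rw [Set.mem_singleton_iff] at hy
          rw [hy] at hr
          exact hr
        -- hTm is about σ (n-2)
        have hTm' : TransDist Γ ρ
            (if i - 1 = 0 then ({x₀} : Set V) else if i - 1 = n then {xN} else σ (i-1)) L := hTm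
        rw [if_neg (show ¬(i - 1 = 0) by omega), if_neg (show ¬(i - 1 = n) by omega)] at hTm'
        have e3 : i - 1 = n - 2 := by omega
        rw [e3] at hTm'
        obtain ⟨w, hwσ, hwr⟩ := hTm'.2.2
        -- TransDist ρ (σ n) L
        have hTn : TransDist Γ ρ (σ n) L := by
          refine ⟨?_, ?_, ⟨xN, hxNσ0, hpxN⟩⟩
          · intro p hp y hy
            have t1 : 2 * L ≤ Γ.dist w y := by
              have := C.low2 (n-2) (by omega) w hwσ y (by
                have e : n - 2 + 2 = n := by omega
                rw [e]
                exact hy)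
              exact this
            have t2 : Γ.dist w y ≤ Γ.dist w p + Γ.dist p y := hconn.dist_triangle
            have t3 : Γ.dist p w = L := hwr p hp
            have t4 : Γ.dist w p = Γ.dist p w := SimpleGraph.dist_comm
            omega
          · obtain ⟨pf, hpfσ, hpfr⟩ := C.rf (n-1) (by omega)
            refine ⟨pf, hsub (by rw [hiN1]; exact hpfσ), fun y hy => ?_⟩
            exact hpfr y (by rw [eN]; exact hy)
        have hres := hmaxE (n-2) (by omega) ρ hρ
          (by
            have e : n - 2 + 1 = i := by omega
            rw [e]
            exact hsub)
          (by
            exact hTm')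
          (by
            have e : n - 2 + 2 = n := by omega
            rw [e]
            exact hTn)
        have e : n - 2 + 1 = i := by omega
        rw [e] at hres
        exact hres
      · -- middle case : 2 ≤ i ≤ n - 2
        have h2i : 2 ≤ i := by omega
        have him : i + 2 ≤ n := by omega
        have hTm' : TransDist Γ ρ
            (if i - 1 = 0 then ({x₀} : Set V) else if i - 1 = n then {xN} else σ (i-1)) L := hTm
        rw [if_neg (show ¬(i - 1 = 0) by omega), if_neg (show ¬(i - 1 = n) by omega)] at hTm'
        have hTp'' : TransDist Γ ρ
            (if i + 1 = 0 then ({x₀} : Set V) else if i + 1 = n then {xN} else σ (i+1)) L := hTp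
        rw [if_neg (show ¬(i + 1 = 0) by omega), if_neg (show ¬(i + 1 = n) by omega)] at hTp''
        have hres := hmaxE (i-1) (by omega) ρ hρ
          (by
            have e : i - 1 + 1 = i := by omega
            rw [e]
            exact hsub)
          (by
            exact hTm')
          (by
            have e : i - 1 + 2 = i + 1 := by omega
            rw [e]
            exact hTp'')
        have e : i - 1 + 1 = i := by omega
        rw [e] at hres
        exact hres
end

section
/- Let X be a locally finite Helly graph and L ≥ 1 an integer. Then any bi-infinite local L-clique-path (σ_n)_{n ∈ ℤ} in X is an L-clique-path, i.e., σ_n ≷ σ_m = |n−m|·L for all n ≠ m in ℤ. In particular, for all n, m ∈ ℤ and all vertices x ∈ σ_n, y ∈ σ_m, one has d(x, y) ≥ |n−m|·L. -/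
open SimpleGraph Pointwise

namespace LocalToGlobalAux

variable {V : Type*} {Γ : SimpleGraph V} {L : ℕ} {σ : ℤ → Set V}

lemma dist_le_one_of_clique (hc : Γ.Connected) {s : Set V} (hs : Γ.IsClique s)
    {a b : V} (ha : a ∈ s) (hb : b ∈ s) : Γ.dist a b ≤ 1 := by
  by_cases h : a = b
  · subst h; simp [SimpleGraph.dist_self]
  · exact le_of_eq (SimpleGraph.dist_eq_one_iff_adj.mpr (hs ha hb h))

lemma balls_meet (hc : Γ.Connected) :
    ∀ (r : ℕ) {a b : V} (t : ℕ), Γ.dist a b ≤ r + t →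
      ∃ y : V, Γ.dist a y ≤ r ∧ Γ.dist b y ≤ t := by
  intro r
  induction r with
  | zero =>
      intro a b t h
      refine ⟨a, by simp [SimpleGraph.dist_self], ?_⟩
      rw [SimpleGraph.dist_comm]
      omega
  | succ r ih =>
      intro a b t h
      by_cases h' : Γ.dist a b ≤ r + t
      · obtain ⟨y, h1, h2⟩ := ih t h'
        exact ⟨y, h1.trans (Nat.le_succ r), h2⟩
      · have hne : Γ.dist a b ≠ 0 := by omega
        obtain ⟨p, hp⟩ := (hc a b).exists_walk_length_eq_dist
        cases p with
        | nil => rw [SimpleGraph.Walk.length_nil] at hp; omega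
        | cons hadj q =>
            rename_i c
            rw [SimpleGraph.Walk.length_cons] at hp
            have hq : Γ.dist c b ≤ r + t := by
              have h2 := SimpleGraph.dist_le q
              omega
            obtain ⟨y, h1, h2⟩ := ih t hq
            refine ⟨y, ?_, h2⟩
            have htri : Γ.dist a y ≤ Γ.dist a c + Γ.dist c y := hc.dist_triangle
            have hac : Γ.dist a c ≤ 1 := le_of_eq (SimpleGraph.dist_eq_one_iff_adj.mpr hadj)
            omega

lemma TD_symm {A B : Set V} {r : ℕ} (h : TransDist Γ A B r) : TransDist Γ B A r := by
  obtain ⟨h1, ⟨x, hx, h2⟩, ⟨y, hy, h3⟩⟩ := h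
  refine ⟨fun b hb a ha => ?_, ⟨y, hy, fun a ha => ?_⟩, ⟨x, hx, fun b hb => ?_⟩⟩
  · rw [SimpleGraph.dist_comm]; exact h1 a ha b hb
  · rw [SimpleGraph.dist_comm]; exact h3 a ha
  · rw [SimpleGraph.dist_comm]; exact h2 b hb

section accessors

variable (hσ : IsLocalCliquePathZ Γ L σ)
include hσ

lemma cliq (n : ℤ) : Γ.IsClique (σ n) := by
  have h := (hσ n).1 0 (by norm_num)
  simpa using h.1

lemma nonemp (n : ℤ) : (σ n).Nonempty := by
  have h := (hσ n).1 0 (by norm_num)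
  simpa using h.2

lemma T1 (n : ℤ) : TransDist Γ (σ n) (σ (n + 1)) L := by
  have h := (hσ n).2.2.1 0 1 (by norm_num) (by norm_num)
  simpa using h

lemma T2 (n : ℤ) : TransDist Γ (σ n) (σ (n + 2)) (2 * L) := by
  have h := (hσ n).2.2.1 0 2 (by norm_num) (le_refl 2)
  simpa using h

lemma maxi (n : ℤ) {ρ : Set V} (h1 : Γ.IsClique ρ) (h2 : σ (n + 1) ⊆ ρ)
    (h3 : TransDist Γ ρ (σ n) L) (h4 : TransDist Γ ρ (σ (n + 2)) L) : ρ = σ (n + 1) := by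
  have h := (hσ n).2.2.2 1 le_rfl le_rfl ρ h1 (by simpa using h2) (by simpa using h3)
    (by simpa using h4)
  simpa using h

lemma gateA (n : ℤ) : ∃ g ∈ σ (n + 1), ∀ x ∈ σ n, Γ.dist x g = L := (T1 hσ n).2.2

lemma gateB (n : ℤ) : ∃ g ∈ σ n, ∀ y ∈ σ (n + 1), Γ.dist g y = L := (T1 hσ n).2.1

lemma chainF (hc : Γ.Connected) :
    ∀ (c : ℕ) (n : ℤ), ∀ x ∈ σ n, ∃ t ∈ σ (n + 1 + (c : ℤ)), Γ.dist x t ≤ (c + 1) * L := by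
  intro c
  induction c with
  | zero =>
      intro n x hx
      obtain ⟨g, hg, hgd⟩ := gateA hσ n
      refine ⟨g, by simpa using hg, ?_⟩
      simpa using le_of_eq (hgd x hx)
  | succ c ih =>
      intro n x hx
      obtain ⟨t, ht, htd⟩ := ih n x hx
      obtain ⟨g, hg, hgd⟩ := gateA hσ (n + 1 + (c : ℤ))
      refine ⟨g, ?_, ?_⟩
      · have e : n + 1 + (c : ℤ) + 1 = n + 1 + ((c + 1 : ℕ) : ℤ) := by push_cast; ring
        rwa [e] at hg
      · calc Γ.dist x g ≤ Γ.dist x t + Γ.dist t g := hc.dist_triangle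
          _ ≤ (c + 1) * L + L := add_le_add htd (le_of_eq (hgd t ht))
          _ = (c + 1 + 1) * L := by ring

lemma chainFub (hc : Γ.Connected) :
    ∀ (c : ℕ) (n : ℤ), ∀ x ∈ σ n, ∀ y ∈ σ (n + 1 + (c : ℤ)),
      Γ.dist x y ≤ (c + 1) * L + 1 := by
  intro c n x hx y hy
  obtain ⟨t, ht, htd⟩ := chainF hσ hc c n x hx
  have h1 : Γ.dist t y ≤ 1 := dist_le_one_of_clique hc (cliq hσ _) ht hy
  calc Γ.dist x y ≤ Γ.dist x t + Γ.dist t y := hc.dist_triangle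
    _ ≤ (c + 1) * L + 1 := add_le_add htd h1

lemma chainB (hc : Γ.Connected) :
    ∀ (c : ℕ) (n : ℤ), ∀ z ∈ σ n, ∃ t ∈ σ (n - 1 - (c : ℤ)), Γ.dist z t ≤ (c + 1) * L := by
  intro c
  induction c with
  | zero =>
      intro n z hz
      obtain ⟨g, hg, hgd⟩ := gateB hσ (n - 1)
      refine ⟨g, by simpa using hg, ?_⟩
      have : Γ.dist g z = L := hgd z (by rw [show n - 1 + 1 = n by ring]; exact hz)
      rw [SimpleGraph.dist_comm]
      simpa using le_of_eq this
  | succ c ih =>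
      intro n z hz
      obtain ⟨t, ht, htd⟩ := ih n z hz
      obtain ⟨g, hg, hgd⟩ := gateB hσ (n - 1 - (c : ℤ) - 1)
      have hgd' : Γ.dist g t = L := hgd t (by rw [show n - 1 - (c : ℤ) - 1 + 1 = n - 1 - (c : ℤ) by ring]; exact ht)
      refine ⟨g, ?_, ?_⟩
      · have e : n - 1 - (c : ℤ) - 1 = n - 1 - ((c + 1 : ℕ) : ℤ) := by push_cast; ring
        rwa [e] at hg
      · calc Γ.dist z g ≤ Γ.dist z t + Γ.dist t g := hc.dist_triangle
          _ ≤ (c + 1) * L + L := add_le_add htd (le_of_eq (by rw [SimpleGraph.dist_comm]; exact hgd'))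
          _ = (c + 1 + 1) * L := by ring

lemma chainBub (hc : Γ.Connected) :
    ∀ (c : ℕ) (n : ℤ), ∀ z ∈ σ n, ∀ y ∈ σ (n - 1 - (c : ℤ)),
      Γ.dist z y ≤ (c + 1) * L + 1 := by
  intro c n z hz y hy
  obtain ⟨t, ht, htd⟩ := chainB hσ hc c n z hz
  have h1 : Γ.dist t y ≤ 1 := dist_le_one_of_clique hc (cliq hσ _) ht hy
  calc Γ.dist z y ≤ Γ.dist z t + Γ.dist t y := hc.dist_triangle
    _ ≤ (c + 1) * L + 1 := add_le_add htd h1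


lemma key (hΓ : IsHellyGraph Γ) (hL : 1 ≤ L) :
    ∀ k : ℕ, 1 ≤ k → ∀ n : ℤ, TransDist Γ (σ n) (σ (n + (k : ℤ))) (k * L) := by
  have hc : Γ.Connected := hΓ.1
  have σeq : ∀ a b : ℤ, a = b → σ a = σ b := fun a b h => by rw [h]
  have cbd : ∀ (t : ℤ) {a b : V}, a ∈ σ t → b ∈ σ t → Γ.dist a b ≤ 1 :=
    fun t {a b} ha hb => dist_le_one_of_clique hc (cliq hσ t) ha hb
  intro k
  induction k using Nat.strong_induction_on with
  | _ k IH =>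
    rcases k with _ | (_ | (_ | j))
    · intro h; exact absurd h (by norm_num)
    · intro _ n; simpa using T1 hσ n
    · intro _ n; simpa using T2 hσ n
    · show 1 ≤ j + 3 → ∀ n : ℤ, TransDist Γ (σ n) (σ (n + ((j + 3 : ℕ) : ℤ))) ((j + 3) * L)
      intro _
      set A := (j + 1) * L with hA
      have eA : L ≤ A := by rw [hA]; exact Nat.le_mul_of_pos_left L (by omega)
      have e2 : (j + 2) * L = A + L := by rw [hA]; ring
      have e3 : (j + 3) * L = A + 2 * L := by rw [hA]; ring
      have Pj2 : ∀ n : ℤ, TransDist Γ (σ n) (σ (n + (j : ℤ) + 2)) (A + L) := by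
        intro n
        have h := IH (j + 2) (by omega) (by omega) n
        rw [show (((j + 2 : ℕ)) : ℤ) = (j : ℤ) + 2 by push_cast; ring] at h
        rw [show n + ((j : ℤ) + 2) = n + (j : ℤ) + 2 by ring] at h
        rwa [e2] at h
      have LBj2 : ∀ n : ℤ, ∀ a ∈ σ n, ∀ b ∈ σ (n + (j : ℤ) + 2), A + L ≤ Γ.dist a b :=
        fun n a ha b hb => (Pj2 n).1 a ha b hb
      have LB2 : ∀ n : ℤ, ∀ a ∈ σ n, ∀ b ∈ σ (n + 2), 2 * L ≤ Γ.dist a b :=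
        fun n a ha b hb => (T2 hσ n).1 a ha b hb
      have LB1 : ∀ n : ℤ, ∀ a ∈ σ n, ∀ b ∈ σ (n + 1), L ≤ Γ.dist a b :=
        fun n a ha b hb => (T1 hσ n).1 a ha b hb
      have LBmain : ∀ n : ℤ, ∀ x ∈ σ n, ∀ z ∈ σ (n + (j : ℤ) + 3),
          A + 2 * L ≤ Γ.dist x z := by
        by_contra hbad
        push_neg at hbad
        obtain ⟨n, x, hx, z, hz, hlt⟩ := hbad
        -- gates
        obtain ⟨g1, hg1mem, hg1d⟩ := gateA hσ n
        obtain ⟨hh, hhmem0, hhd0⟩ := gateB hσ (n + (j : ℤ) + 2)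
        have hhmem : hh ∈ σ (n + (j : ℤ) + 2) := hhmem0
        have hhd : ∀ y ∈ σ (n + (j : ℤ) + 3), Γ.dist hh y = L := fun y hy =>
          hhd0 y (σeq (n + (j : ℤ) + 3) (n + (j : ℤ) + 2 + 1) (by ring) ▸ hy)
        obtain ⟨gg4, gg4mem0, gg4d0⟩ := gateA hσ (n + (j : ℤ) + 3)
        have gg4mem : gg4 ∈ σ (n + (j : ℤ) + 4) :=
          σeq (n + (j : ℤ) + 3 + 1) (n + (j : ℤ) + 4) (by ring) ▸ gg4mem0
        have gg4d : ∀ y ∈ σ (n + (j : ℤ) + 3), Γ.dist y gg4 = L := gg4d0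
        obtain ⟨gk2, gk2mem0, gk2d⟩ := gateA hσ (n + (j : ℤ) + 2)
        have gk2mem : gk2 ∈ σ (n + (j : ℤ) + 3) :=
          σeq (n + (j : ℤ) + 2 + 1) (n + (j : ℤ) + 3) (by ring) ▸ gk2mem0
        obtain ⟨qk, qkmem, qkd0⟩ := gateB hσ (n + (j : ℤ) + 3)
        have qkd : ∀ y ∈ σ (n + (j : ℤ) + 4), Γ.dist qk y = L := fun y hy =>
          qkd0 y (σeq (n + (j : ℤ) + 4) (n + (j : ℤ) + 3 + 1) (by ring) ▸ hy)
        obtain ⟨uu, uumem, uud0⟩ := gateB hσ (n - 1)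
        have uud : ∀ y ∈ σ n, Γ.dist uu y = L := fun y hy =>
          uud0 y (σeq n (n - 1 + 1) (by ring) ▸ hy)
        obtain ⟨bb, bbmem, bbd⟩ := gateB hσ n
        obtain ⟨gA0, gA0mem0, gA0d⟩ := gateA hσ (n - 1)
        have gA0mem : gA0 ∈ σ n := σeq (n - 1 + 1) n (by ring) ▸ gA0mem0
        obtain ⟨bβ, bβmem0, bβd⟩ := gateA hσ (n + 1)
        have bβmem : bβ ∈ σ (n + 2) := σeq (n + 1 + 1) (n + 2) (by ring) ▸ bβmem0
        obtain ⟨q1, q1mem, q1d0⟩ := gateB hσ (n + 1)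
        have q1d : ∀ y ∈ σ (n + 2), Γ.dist q1 y = L := fun y hy =>
          q1d0 y (σeq (n + 2) (n + 1 + 1) (by ring) ▸ hy)
        obtain ⟨v0, hv0⟩ := nonemp hσ (n + 1)
        -- floor
        have floorn : ∀ x' ∈ σ n, ∀ z' ∈ σ (n + (j : ℤ) + 3), A ≤ Γ.dist x' z' := by
          intro x' hx' z' hz'
          have h1 : A + L ≤ Γ.dist g1 z' :=
            LBj2 (n + 1) g1 hg1mem z' (σeq (n + (j : ℤ) + 3) (n + 1 + (j : ℤ) + 2) (by ring) ▸ hz')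
          have h2 : Γ.dist g1 x' = L := by rw [SimpleGraph.dist_comm]; exact hg1d x' hx'
          have h3 : Γ.dist g1 z' ≤ Γ.dist g1 x' + Γ.dist x' z' := hc.dist_triangle
          omega
        set m := Γ.dist x z with hm
        -- general upper bound: consecutive cliques
        have F4 : ∀ x' ∈ σ n, ∀ v ∈ σ (n + 1), Γ.dist x' v ≤ L + 1 := by
          intro x' hx' v hv
          have h := chainFub hσ hc 0 n x' hx' v
            (σeq (n + 1) (n + 1 + ((0 : ℕ) : ℤ)) (by push_cast; ring) ▸ hv)
          rw [show ((0 : ℕ) + 1) * L = L by ring] at h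
          exact h
        -- upper bounds for the Z-family
        have F1 : ∀ w ∈ σ (n + (j : ℤ) + 3), Γ.dist x w ≤ m + 1 := by
          intro w hw
          have h1 := cbd (n + (j : ℤ) + 3) hz hw
          have h2 : Γ.dist x w ≤ Γ.dist x z + Γ.dist z w := hc.dist_triangle
          omega
        have F2 : Γ.dist x hh ≤ m + L := by
          have h1 : Γ.dist z hh = L := by rw [SimpleGraph.dist_comm]; exact hhd z hz
          have h2 : Γ.dist x hh ≤ Γ.dist x z + Γ.dist z hh := hc.dist_triangle
          omega
        have F3 : Γ.dist x gg4 ≤ m + L := by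
          have h1 : Γ.dist z gg4 = L := gg4d z hz
          have h2 : Γ.dist x gg4 ≤ Γ.dist x z + Γ.dist z gg4 := hc.dist_triangle
          omega
        have F8 : ∀ v ∈ σ (n + 1), ∀ w ∈ σ (n + (j : ℤ) + 3), Γ.dist v w ≤ A + L + 1 := by
          intro v hv w hw
          have h := chainFub hσ hc (j + 1) (n + 1) v hv w
            (σeq (n + (j : ℤ) + 3) (n + 1 + 1 + ((j + 1 : ℕ) : ℤ)) (by push_cast; ring) ▸ hw)
          rw [show ((j + 1 : ℕ) + 1) * L = A + L by rw [hA]; ring] at h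
          exact h
        have F10 : ∀ v ∈ σ (n + 1), Γ.dist v hh ≤ A + 1 := by
          intro v hv
          have h := chainFub hσ hc j (n + 1) v hv hh
            (σeq (n + (j : ℤ) + 2) (n + 1 + 1 + (j : ℤ)) (by ring) ▸ hhmem)
          rw [show ((j : ℕ) + 1) * L = A by rw [hA]] at h
          exact h
        have F11 : ∀ v ∈ σ (n + 1), Γ.dist v gg4 ≤ A + 2 * L := by
          intro v hv
          obtain ⟨t, ht, htd⟩ := chainF hσ hc (j + 1) (n + 1) v hv
          have ht' : t ∈ σ (n + (j : ℤ) + 3) :=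
            σeq (n + 1 + 1 + ((j + 1 : ℕ) : ℤ)) (n + (j : ℤ) + 3) (by push_cast; ring) ▸ ht
          have h1 : Γ.dist t gg4 = L := gg4d t ht'
          have h2 : Γ.dist v gg4 ≤ Γ.dist v t + Γ.dist t gg4 := hc.dist_triangle
          rw [show ((j + 1 : ℕ) + 1) * L = A + L by rw [hA]; ring] at htd
          omega
        have F9 : Γ.dist hh gg4 ≤ 2 * L := by
          have h1 : Γ.dist hh z = L := hhd z hz
          have h2 : Γ.dist z gg4 = L := gg4d z hz
          have h3 : Γ.dist hh gg4 ≤ Γ.dist hh z + Γ.dist z gg4 := hc.dist_triangle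
          omega
        -- Helly application (Z)
        have hZ : ∃ y : V, Γ.dist x y ≤ m ∧ (∀ w ∈ σ (n + (j : ℤ) + 3), Γ.dist w y ≤ 1) ∧
            Γ.dist hh y ≤ L ∧ Γ.dist gg4 y ≤ L ∧ (∀ v ∈ σ (n + 1), Γ.dist v y ≤ A + L) := by
          set S : Set (V × ℕ) := {p | p = (x, m) ∨ (∃ w ∈ σ (n + (j : ℤ) + 3), p = (w, 1)) ∨
            p = (hh, L) ∨ p = (gg4, L) ∨ (∃ v ∈ σ (n + 1), p = (v, A + L))} with hS
          have hpair : ∀ p ∈ S, ∀ q ∈ S, ∃ y : V, Γ.dist p.1 y ≤ p.2 ∧ Γ.dist q.1 y ≤ q.2 := by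
            intro p hp q hq
            simp only [hS, Set.mem_setOf_eq] at hp hq
            apply balls_meet hc
            rcases hp with rfl | ⟨w, hw, rfl⟩ | rfl | rfl | ⟨v, hv, rfl⟩ <;>
              rcases hq with rfl | ⟨w', hw', rfl⟩ | rfl | rfl | ⟨v', hv', rfl⟩ <;> dsimp only
            · simp [SimpleGraph.dist_self]
            · have := F1 w' hw'; omega
            · have := F2; omega
            · have := F3; omega
            · have := F4 x hx v' hv'; omega
            · rw [SimpleGraph.dist_comm]; have := F1 w hw; omega
            · have := cbd (n + (j : ℤ) + 3) hw hw'; omega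
            · rw [SimpleGraph.dist_comm]; have := hhd w hw; omega
            · have := gg4d w hw; omega
            · rw [SimpleGraph.dist_comm]; have := F8 v' hv' w hw; omega
            · rw [SimpleGraph.dist_comm]; have := F2; omega
            · have := hhd w' hw'; omega
            · simp [SimpleGraph.dist_self]
            · have := F9; omega
            · rw [SimpleGraph.dist_comm]; have := F10 v' hv'; omega
            · rw [SimpleGraph.dist_comm]; have := F3; omega
            · rw [SimpleGraph.dist_comm]; have := gg4d w' hw'; omega
            · rw [SimpleGraph.dist_comm]; have := F9; omega
            · simp [SimpleGraph.dist_self]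
            · rw [SimpleGraph.dist_comm]; have := F11 v' hv'; omega
            · rw [SimpleGraph.dist_comm]; have := F4 x hx v hv; omega
            · have := F8 v hv w' hw'; omega
            · have := F10 v hv; omega
            · have := F11 v hv; omega
            · have := cbd (n + 1) hv hv'; omega
          obtain ⟨y, hy⟩ := hΓ.2 S hpair
          exact ⟨y, hy (x, m) (Or.inl rfl),
            fun w hw => hy (w, 1) (Or.inr (Or.inl ⟨w, hw, rfl⟩)),
            hy (hh, L) (Or.inr (Or.inr (Or.inl rfl))),
            hy (gg4, L) (Or.inr (Or.inr (Or.inr (Or.inl rfl)))),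
            fun v hv => hy (v, A + L) (Or.inr (Or.inr (Or.inr (Or.inr ⟨v, hv, rfl⟩))))⟩
        obtain ⟨w3, hw3x, hw3k, hw3hh, hw3gg, hw3v⟩ := hZ
        -- w3 is in σ (n+j+3)
        have hw3mem : w3 ∈ σ (n + (j : ℤ) + 3) := by
          by_cases hmem : w3 ∈ σ (n + (j : ℤ) + 3)
          · exact hmem
          · have hclique : Γ.IsClique (insert w3 (σ (n + (j : ℤ) + 3))) := by
              apply (cliq hσ _).insert
              intro b hb hne
              have hd : Γ.dist w3 b ≤ 1 := by
                rw [SimpleGraph.dist_comm]; exact hw3k b hb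
              have h0 : Γ.dist w3 b ≠ 0 := fun h => hne (hc.dist_eq_zero_iff.mp h)
              exact SimpleGraph.dist_eq_one_iff_adj.mp (by omega)
            have hTa : TransDist Γ (insert w3 (σ (n + (j : ℤ) + 3))) (σ (n + (j : ℤ) + 2)) L := by
              refine ⟨?_, ⟨gk2, Set.mem_insert_of_mem _ gk2mem, fun u hu => ?_⟩,
                ⟨hh, hhmem, fun a ha => ?_⟩⟩
              · intro a ha u hu
                rcases Set.mem_insert_iff.mp ha with rfl | ha
                · have h1 : 2 * L ≤ Γ.dist u gg4 := LB2 (n + (j : ℤ) + 2) u hu gg4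
                    (σeq (n + (j : ℤ) + 4) (n + (j : ℤ) + 2 + 2) (by ring) ▸ gg4mem)
                  have h2 : Γ.dist u gg4 ≤ Γ.dist u a + Γ.dist a gg4 := hc.dist_triangle
                  have h3 : Γ.dist a gg4 ≤ L := by rw [SimpleGraph.dist_comm]; exact hw3gg
                  rw [SimpleGraph.dist_comm]; omega
                · rw [SimpleGraph.dist_comm]
                  exact LB1 (n + (j : ℤ) + 2) u hu a
                    (σeq (n + (j : ℤ) + 3) (n + (j : ℤ) + 2 + 1) (by ring) ▸ ha)
              · rw [SimpleGraph.dist_comm]; exact gk2d u hu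
              · rcases Set.mem_insert_iff.mp ha with rfl | ha
                · have hle : Γ.dist a hh ≤ L := by rw [SimpleGraph.dist_comm]; exact hw3hh
                  have h1 : 2 * L ≤ Γ.dist hh gg4 := LB2 (n + (j : ℤ) + 2) hh hhmem gg4
                    (σeq (n + (j : ℤ) + 4) (n + (j : ℤ) + 2 + 2) (by ring) ▸ gg4mem)
                  have h2 : Γ.dist hh gg4 ≤ Γ.dist hh a + Γ.dist a gg4 := hc.dist_triangle
                  have h3 : Γ.dist a gg4 ≤ L := by rw [SimpleGraph.dist_comm]; exact hw3gg
                  have h4 : Γ.dist hh a = Γ.dist a hh := SimpleGraph.dist_comm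
                  omega
                · rw [SimpleGraph.dist_comm]; exact hhd a ha
            have hTb : TransDist Γ (insert w3 (σ (n + (j : ℤ) + 3))) (σ (n + (j : ℤ) + 4)) L := by
              refine ⟨?_, ⟨qk, Set.mem_insert_of_mem _ qkmem, fun u hu => qkd u hu⟩,
                ⟨gg4, gg4mem, fun a ha => ?_⟩⟩
              · intro a ha u hu
                rcases Set.mem_insert_iff.mp ha with rfl | ha
                · have h1 : 2 * L ≤ Γ.dist hh u := LB2 (n + (j : ℤ) + 2) hh hhmem u
                    (σeq (n + (j : ℤ) + 4) (n + (j : ℤ) + 2 + 2) (by ring) ▸ hu)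
                  have h2 : Γ.dist hh u ≤ Γ.dist hh a + Γ.dist a u := hc.dist_triangle
                  have h3 : Γ.dist hh a ≤ L := hw3hh
                  omega
                · exact LB1 (n + (j : ℤ) + 3) a ha u
                    (σeq (n + (j : ℤ) + 4) (n + (j : ℤ) + 3 + 1) (by ring) ▸ hu)
              · rcases Set.mem_insert_iff.mp ha with rfl | ha
                · have hle : Γ.dist a gg4 ≤ L := by rw [SimpleGraph.dist_comm]; exact hw3gg
                  have h1 : 2 * L ≤ Γ.dist hh gg4 := LB2 (n + (j : ℤ) + 2) hh hhmem gg4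
                    (σeq (n + (j : ℤ) + 4) (n + (j : ℤ) + 2 + 2) (by ring) ▸ gg4mem)
                  have h2 : Γ.dist hh gg4 ≤ Γ.dist hh a + Γ.dist a gg4 := hc.dist_triangle
                  have h3 : Γ.dist hh a ≤ L := hw3hh
                  omega
                · exact gg4d a ha
            have heq := maxi hσ (n + (j : ℤ) + 2) hclique
              (fun a ha => Set.mem_insert_of_mem _
                (σeq (n + (j : ℤ) + 2 + 1) (n + (j : ℤ) + 3) (by ring) ▸ ha))
              hTa (σeq (n + (j : ℤ) + 4) (n + (j : ℤ) + 2 + 2) (by ring) ▸ hTb)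
            have : w3 ∈ σ (n + (j : ℤ) + 2 + 1) := heq ▸ Set.mem_insert w3 _
            exact σeq (n + (j : ℤ) + 2 + 1) (n + (j : ℤ) + 3) (by ring) ▸ this
        -- normalize x : Helly application (X)
        set m1 := Γ.dist x w3 with hm1
        have hm1A : A ≤ m1 := floorn x hx w3 hw3mem
        have hm1lt : m1 < A + 2 * L := lt_of_le_of_lt hw3x hlt
        have G1 : ∀ x' ∈ σ n, Γ.dist w3 x' ≤ m1 + 1 := by
          intro x' hx'
          have h1 : Γ.dist w3 x' ≤ Γ.dist w3 x + Γ.dist x x' := hc.dist_triangle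
          have h2 : Γ.dist w3 x = Γ.dist x w3 := SimpleGraph.dist_comm
          have h3 := cbd n hx hx'
          omega
        have G2 : Γ.dist w3 uu ≤ m1 + L := by
          have h1 : Γ.dist w3 uu ≤ Γ.dist w3 x + Γ.dist x uu := hc.dist_triangle
          have h2 : Γ.dist w3 x = Γ.dist x w3 := SimpleGraph.dist_comm
          have h3 : Γ.dist uu x = L := uud x hx
          have h4 : Γ.dist x uu = Γ.dist uu x := SimpleGraph.dist_comm
          omega
        have G3 : ∀ v ∈ σ (n + 1), Γ.dist w3 v ≤ m1 + L := by
          intro v hv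
          have h1 : Γ.dist w3 v = Γ.dist v w3 := SimpleGraph.dist_comm
          have h2 := hw3v v hv
          omega
        have G5 : ∀ x' ∈ σ n, Γ.dist x' uu ≤ 1 + L := by
          intro x' hx'
          have h1 : Γ.dist x' uu = Γ.dist uu x' := SimpleGraph.dist_comm
          have h2 := uud x' hx'
          omega
        have G6 : ∀ v ∈ σ (n + 1), Γ.dist uu v ≤ 2 * L := by
          intro v hv
          have h1 : Γ.dist uu v ≤ Γ.dist uu bb + Γ.dist bb v := hc.dist_triangle
          have h2 : Γ.dist uu bb = L := uud bb bbmem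
          have h3 : Γ.dist bb v = L := bbd v hv
          omega
        have hX : ∃ y : V, Γ.dist w3 y ≤ m1 ∧ (∀ x' ∈ σ n, Γ.dist x' y ≤ 1) ∧
            Γ.dist uu y ≤ L ∧ (∀ v ∈ σ (n + 1), Γ.dist v y ≤ L) := by
          set S : Set (V × ℕ) := {p | p = (w3, m1) ∨ (∃ x' ∈ σ n, p = (x', 1)) ∨
            p = (uu, L) ∨ (∃ v ∈ σ (n + 1), p = (v, L))} with hS
          have hpair : ∀ p ∈ S, ∀ q ∈ S, ∃ y : V, Γ.dist p.1 y ≤ p.2 ∧ Γ.dist q.1 y ≤ q.2 := by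
            intro p hp q hq
            simp only [hS, Set.mem_setOf_eq] at hp hq
            apply balls_meet hc
            rcases hp with rfl | ⟨a, ha, rfl⟩ | rfl | ⟨v, hv, rfl⟩ <;>
              rcases hq with rfl | ⟨a', ha', rfl⟩ | rfl | ⟨v', hv', rfl⟩ <;> dsimp only
            · simp [SimpleGraph.dist_self]
            · have := G1 a' ha'; omega
            · have := G2; omega
            · have := G3 v' hv'; omega
            · rw [SimpleGraph.dist_comm]; have := G1 a ha; omega
            · have := cbd n ha ha'; omega
            · have := G5 a ha; omega
            · have := F4 a ha v' hv'; omega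
            · rw [SimpleGraph.dist_comm]; have := G2; omega
            · have := uud a' ha'; omega
            · simp [SimpleGraph.dist_self]
            · have := G6 v' hv'; omega
            · rw [SimpleGraph.dist_comm]; have := G3 v hv; omega
            · rw [SimpleGraph.dist_comm]; have := F4 a' ha' v hv; omega
            · rw [SimpleGraph.dist_comm]; have := G6 v hv; omega
            · have := cbd (n + 1) hv hv'; omega
          obtain ⟨y, hy⟩ := hΓ.2 S hpair
          exact ⟨y, hy (w3, m1) (Or.inl rfl),
            fun a ha => hy (a, 1) (Or.inr (Or.inl ⟨a, ha, rfl⟩)),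
            hy (uu, L) (Or.inr (Or.inr (Or.inl rfl))),
            fun v hv => hy (v, L) (Or.inr (Or.inr (Or.inr ⟨v, hv, rfl⟩)))⟩
        obtain ⟨x1, Ex1, Ex2, Ex3, Ex4⟩ := hX
        have hx1v : ∀ v ∈ σ (n + 1), Γ.dist x1 v = L := by
          intro v hv
          have hle : Γ.dist x1 v ≤ L := by rw [SimpleGraph.dist_comm]; exact Ex4 v hv
          have h1 : 2 * L ≤ Γ.dist uu v := LB2 (n - 1) uu uumem v
            (σeq (n + 1) (n - 1 + 2) (by ring) ▸ hv)
          have h2 : Γ.dist uu v ≤ Γ.dist uu x1 + Γ.dist x1 v := hc.dist_triangle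
          have h3 : Γ.dist uu x1 ≤ L := Ex3
          omega
        have hx1mem : x1 ∈ σ n := by
          by_cases hmem : x1 ∈ σ n
          · exact hmem
          · have hclique : Γ.IsClique (insert x1 (σ n)) := by
              apply (cliq hσ _).insert
              intro b hb hne
              have hd : Γ.dist x1 b ≤ 1 := by
                rw [SimpleGraph.dist_comm]; exact Ex2 b hb
              have h0 : Γ.dist x1 b ≠ 0 := fun h => hne (hc.dist_eq_zero_iff.mp h)
              exact SimpleGraph.dist_eq_one_iff_adj.mp (by omega)
            have hTa : TransDist Γ (insert x1 (σ n)) (σ (n - 1)) L := by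
              refine ⟨?_, ⟨gA0, Set.mem_insert_of_mem _ gA0mem, fun u hu => ?_⟩,
                ⟨uu, uumem, fun a ha => ?_⟩⟩
              · intro a ha u hu
                rcases Set.mem_insert_iff.mp ha with rfl | ha
                · have h1 : 2 * L ≤ Γ.dist u v0 := LB2 (n - 1) u hu v0
                    (σeq (n + 1) (n - 1 + 2) (by ring) ▸ hv0)
                  have h2 : Γ.dist u v0 ≤ Γ.dist u a + Γ.dist a v0 := hc.dist_triangle
                  have h3 : Γ.dist a v0 = L := hx1v v0 hv0
                  have h4 : Γ.dist a u = Γ.dist u a := SimpleGraph.dist_comm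
                  omega
                · rw [SimpleGraph.dist_comm]
                  exact LB1 (n - 1) u hu a (σeq n (n - 1 + 1) (by ring) ▸ ha)
              · rw [SimpleGraph.dist_comm]; exact gA0d u hu
              · rcases Set.mem_insert_iff.mp ha with rfl | ha
                · have hle : Γ.dist a uu ≤ L := by rw [SimpleGraph.dist_comm]; exact Ex3
                  have h1 : 2 * L ≤ Γ.dist uu v0 := LB2 (n - 1) uu uumem v0
                    (σeq (n + 1) (n - 1 + 2) (by ring) ▸ hv0)
                  have h2 : Γ.dist uu v0 ≤ Γ.dist uu a + Γ.dist a v0 := hc.dist_triangle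
                  have h3 : Γ.dist a v0 = L := hx1v v0 hv0
                  have h4 : Γ.dist uu a = Γ.dist a uu := SimpleGraph.dist_comm
                  omega
                · rw [SimpleGraph.dist_comm]; exact uud a ha
            have hTb : TransDist Γ (insert x1 (σ n)) (σ (n + 1)) L := by
              refine ⟨?_, ⟨x1, Set.mem_insert _ _, fun v hv => hx1v v hv⟩,
                ⟨g1, hg1mem, fun a ha => ?_⟩⟩
              · intro a ha u hu
                rcases Set.mem_insert_iff.mp ha with rfl | ha
                · have := hx1v u hu; omega
                · exact LB1 n a ha u hu
              · rcases Set.mem_insert_iff.mp ha with rfl | ha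
                · exact hx1v g1 hg1mem
                · exact hg1d a ha
            have heq := maxi hσ (n - 1) hclique
              (fun a ha => Set.mem_insert_of_mem _ (σeq (n - 1 + 1) n (by ring) ▸ ha))
              hTa (σeq (n + 1) (n - 1 + 2) (by ring) ▸ hTb)
            have : x1 ∈ σ (n - 1 + 1) := heq ▸ Set.mem_insert x1 _
            exact σeq (n - 1 + 1) n (by ring) ▸ this
        set m2 := Γ.dist x1 w3 with hm2
        have hm2le : m2 ≤ m1 := by
          rw [hm2, SimpleGraph.dist_comm]; exact Ex1
        have hm2A : A ≤ m2 := floorn x1 hx1mem w3 hw3mem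
        have hm2lt : m2 < A + 2 * L := lt_of_le_of_lt hm2le hm1lt
        have hA1 : 1 ≤ A := le_trans hL eA
        -- Helly application (c) : the interpolation point
        have Hc3 : Γ.dist x1 bβ ≤ 2 * L := by
          have h1 : Γ.dist x1 bβ ≤ Γ.dist x1 v0 + Γ.dist v0 bβ := hc.dist_triangle
          have h2 : Γ.dist x1 v0 = L := hx1v v0 hv0
          have h3 : Γ.dist v0 bβ = L := bβd v0 hv0
          omega
        have Hc4 : ∀ v ∈ σ (n + 1), Γ.dist w3 v ≤ (A - 1) + (L + 1) := by
          intro v hv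
          have h1 : Γ.dist w3 v = Γ.dist v w3 := SimpleGraph.dist_comm
          have h2 := hw3v v hv
          omega
        have Hc5 : Γ.dist w3 bβ ≤ (A - 1) + 2 * L := by
          have h := chainBub hσ hc j (n + (j : ℤ) + 3) w3 hw3mem bβ
            (σeq (n + 2) (n + (j : ℤ) + 3 - 1 - (j : ℤ)) (by ring) ▸ bβmem)
          rw [show ((j : ℕ) + 1) * L = A by rw [hA]] at h
          omega
        have hCex : ∃ y : V, Γ.dist x1 y ≤ m2 - A + 1 ∧ Γ.dist w3 y ≤ A - 1 ∧
            (∀ v ∈ σ (n + 1), Γ.dist v y ≤ L + 1) ∧ Γ.dist bβ y ≤ 2 * L := by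
          set S : Set (V × ℕ) := {p | p = (x1, m2 - A + 1) ∨ p = (w3, A - 1) ∨
            (∃ v ∈ σ (n + 1), p = (v, L + 1)) ∨ p = (bβ, 2 * L)} with hS
          have hpair : ∀ p ∈ S, ∀ q ∈ S, ∃ y : V, Γ.dist p.1 y ≤ p.2 ∧ Γ.dist q.1 y ≤ q.2 := by
            intro p hp q hq
            simp only [hS, Set.mem_setOf_eq] at hp hq
            apply balls_meet hc
            rcases hp with rfl | rfl | ⟨v, hv, rfl⟩ | rfl <;>
              rcases hq with rfl | rfl | ⟨v', hv', rfl⟩ | rfl <;> dsimp only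
            · simp [SimpleGraph.dist_self]
            · omega
            · have := hx1v v' hv'; omega
            · have := Hc3; omega
            · rw [SimpleGraph.dist_comm]; omega
            · simp [SimpleGraph.dist_self]
            · have := Hc4 v' hv'; omega
            · have := Hc5; omega
            · rw [SimpleGraph.dist_comm]; have := hx1v v hv; omega
            · rw [SimpleGraph.dist_comm]; have := Hc4 v hv; omega
            · have := cbd (n + 1) hv hv'; omega
            · have := bβd v hv; omega
            · rw [SimpleGraph.dist_comm]; have := Hc3; omega
            · rw [SimpleGraph.dist_comm]; have := Hc5; omega
            · rw [SimpleGraph.dist_comm]; have := bβd v' hv'; omega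
            · simp [SimpleGraph.dist_self]
          obtain ⟨y, hy⟩ := hΓ.2 S hpair
          exact ⟨y, hy (x1, m2 - A + 1) (Or.inl rfl),
            hy (w3, A - 1) (Or.inr (Or.inl rfl)),
            fun v hv => hy (v, L + 1) (Or.inr (Or.inr (Or.inl ⟨v, hv, rfl⟩))),
            hy (bβ, 2 * L) (Or.inr (Or.inr (Or.inr rfl)))⟩
        obtain ⟨cc, Ec1, Ec2, Ec3, Ec4⟩ := hCex
        -- Helly application (✱) : the absorbed vertex
        have hWex : ∃ y : V, Γ.dist cc y ≤ L ∧ (∀ v ∈ σ (n + 1), Γ.dist v y ≤ 1) ∧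
            Γ.dist x1 y ≤ L ∧ Γ.dist bβ y ≤ L := by
          set S : Set (V × ℕ) := {p | p = (cc, L) ∨ (∃ v ∈ σ (n + 1), p = (v, 1)) ∨
            p = (x1, L) ∨ p = (bβ, L)} with hS
          have hpair : ∀ p ∈ S, ∀ q ∈ S, ∃ y : V, Γ.dist p.1 y ≤ p.2 ∧ Γ.dist q.1 y ≤ q.2 := by
            intro p hp q hq
            simp only [hS, Set.mem_setOf_eq] at hp hq
            apply balls_meet hc
            rcases hp with rfl | ⟨v, hv, rfl⟩ | rfl | rfl <;>
              rcases hq with rfl | ⟨v', hv', rfl⟩ | rfl | rfl <;> dsimp only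
            · simp [SimpleGraph.dist_self]
            · rw [SimpleGraph.dist_comm]; have := Ec3 v' hv'; omega
            · rw [SimpleGraph.dist_comm]; have := Ec1; omega
            · rw [SimpleGraph.dist_comm]; have := Ec4; omega
            · have := Ec3 v hv; omega
            · have := cbd (n + 1) hv hv'; omega
            · rw [SimpleGraph.dist_comm]; have := hx1v v hv; omega
            · have := bβd v hv; omega
            · have := Ec1; omega
            · have := hx1v v' hv'; omega
            · simp [SimpleGraph.dist_self]
            · have := Hc3; omega
            · have := Ec4; omega
            · rw [SimpleGraph.dist_comm]; have := bβd v' hv'; omega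
            · rw [SimpleGraph.dist_comm]; have := Hc3; omega
            · simp [SimpleGraph.dist_self]
          obtain ⟨y, hy⟩ := hΓ.2 S hpair
          exact ⟨y, hy (cc, L) (Or.inl rfl),
            fun v hv => hy (v, 1) (Or.inr (Or.inl ⟨v, hv, rfl⟩)),
            hy (x1, L) (Or.inr (Or.inr (Or.inl rfl))),
            hy (bβ, L) (Or.inr (Or.inr (Or.inr rfl)))⟩
        obtain ⟨w, Ew1, Ew2, Ew3, Ew4⟩ := hWex
        have hwbβ : L ≤ Γ.dist w bβ := by
          have h1 : 2 * L ≤ Γ.dist x1 bβ := LB2 n x1 hx1mem bβ bβmem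
          have h2 : Γ.dist x1 bβ ≤ Γ.dist x1 w + Γ.dist w bβ := hc.dist_triangle
          have h3 : Γ.dist x1 w ≤ L := Ew3
          omega
        have hwx1 : L ≤ Γ.dist x1 w := by
          have h1 : 2 * L ≤ Γ.dist x1 bβ := LB2 n x1 hx1mem bβ bβmem
          have h2 : Γ.dist x1 bβ ≤ Γ.dist x1 w + Γ.dist w bβ := hc.dist_triangle
          have h3 : Γ.dist w bβ = Γ.dist bβ w := SimpleGraph.dist_comm
          have h4 : Γ.dist bβ w ≤ L := Ew4
          omega
        have hwmem : w ∈ σ (n + 1) := by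
          by_cases hmem : w ∈ σ (n + 1)
          · exact hmem
          · have hclique : Γ.IsClique (insert w (σ (n + 1))) := by
              apply (cliq hσ _).insert
              intro b hb hne
              have hd : Γ.dist w b ≤ 1 := by
                rw [SimpleGraph.dist_comm]; exact Ew2 b hb
              have h0 : Γ.dist w b ≠ 0 := fun h => hne (hc.dist_eq_zero_iff.mp h)
              exact SimpleGraph.dist_eq_one_iff_adj.mp (by omega)
            have hTa : TransDist Γ (insert w (σ (n + 1))) (σ n) L := by
              refine ⟨?_, ⟨g1, Set.mem_insert_of_mem _ hg1mem, fun u hu => ?_⟩,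
                ⟨x1, hx1mem, fun a ha => ?_⟩⟩
              · intro a ha u hu
                rcases Set.mem_insert_iff.mp ha with rfl | ha
                · have h1 : 2 * L ≤ Γ.dist u bβ := LB2 n u hu bβ bβmem
                  have h2 : Γ.dist u bβ ≤ Γ.dist u a + Γ.dist a bβ := hc.dist_triangle
                  have h3 : Γ.dist a bβ = Γ.dist bβ a := SimpleGraph.dist_comm
                  have h4 : Γ.dist bβ a ≤ L := Ew4
                  have h5 : Γ.dist a u = Γ.dist u a := SimpleGraph.dist_comm
                  omega
                · rw [SimpleGraph.dist_comm]; exact LB1 n u hu a ha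
              · rw [SimpleGraph.dist_comm]; exact hg1d u hu
              · rcases Set.mem_insert_iff.mp ha with rfl | ha
                · have h1 : Γ.dist a x1 = Γ.dist x1 a := SimpleGraph.dist_comm
                  have h2 : Γ.dist x1 a ≤ L := Ew3
                  have h3 := hwx1
                  omega
                · rw [SimpleGraph.dist_comm]; exact hx1v a ha
            have hTb : TransDist Γ (insert w (σ (n + 1))) (σ (n + 2)) L := by
              refine ⟨?_, ⟨q1, Set.mem_insert_of_mem _ q1mem, fun u hu => q1d u hu⟩,
                ⟨bβ, bβmem, fun a ha => ?_⟩⟩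
              · intro a ha u hu
                rcases Set.mem_insert_iff.mp ha with rfl | ha
                · have h1 : 2 * L ≤ Γ.dist x1 u := LB2 n x1 hx1mem u hu
                  have h2 : Γ.dist x1 u ≤ Γ.dist x1 a + Γ.dist a u := hc.dist_triangle
                  have h3 : Γ.dist x1 a ≤ L := Ew3
                  omega
                · exact LB1 (n + 1) a ha u (σeq (n + 2) (n + 1 + 1) (by ring) ▸ hu)
              · rcases Set.mem_insert_iff.mp ha with rfl | ha
                · have h1 : Γ.dist a bβ = Γ.dist bβ a := SimpleGraph.dist_comm
                  have h2 : Γ.dist bβ a ≤ L := Ew4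
                  have h3 := hwbβ
                  omega
                · exact bβd a ha
            have heq := maxi hσ n hclique
              (fun a ha => Set.mem_insert_of_mem _ ha) hTa hTb
            exact heq ▸ Set.mem_insert w _
        -- the contradiction
        have fin1 : A + L ≤ Γ.dist w w3 := LBj2 (n + 1) w hwmem w3
          (σeq (n + (j : ℤ) + 3) (n + 1 + (j : ℤ) + 2) (by ring) ▸ hw3mem)
        have fin2 : Γ.dist w w3 ≤ Γ.dist w cc + Γ.dist cc w3 := hc.dist_triangle
        have fin3 : Γ.dist w cc ≤ L := by rw [SimpleGraph.dist_comm]; exact Ew1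
        have fin4 : Γ.dist cc w3 ≤ A - 1 := by rw [SimpleGraph.dist_comm]; exact Ec2
        omega

      intro n
      rw [σeq (n + ((j + 3 : ℕ) : ℤ)) (n + (j : ℤ) + 3) (by push_cast; ring), e3]
      obtain ⟨hh, hhmem, hhd0⟩ := gateB hσ (n + (j : ℤ) + 2)
      have hhd : ∀ y ∈ σ (n + (j : ℤ) + 3), Γ.dist hh y = L := fun y hy =>
        hhd0 y (σeq (n + (j : ℤ) + 3) (n + (j : ℤ) + 2 + 1) (by ring) ▸ hy)
      obtain ⟨gg, ggmem0, ggd⟩ := gateA hσ (n + (j : ℤ) + 2)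
      have ggmem : gg ∈ σ (n + (j : ℤ) + 3) :=
        σeq (n + (j : ℤ) + 2 + 1) (n + (j : ℤ) + 3) (by ring) ▸ ggmem0
      obtain ⟨xs, hxs, hxsd⟩ := (Pj2 n).2.1
      obtain ⟨ys, hys, hysd⟩ := (Pj2 n).2.2
      refine ⟨fun a ha b hb => LBmain n a ha b hb, ⟨xs, hxs, fun zz hzz => ?_⟩,
        ⟨gg, ggmem, fun a ha => ?_⟩⟩
      · have t1 : Γ.dist xs hh = A + L := hxsd hh hhmem
        have t2 : Γ.dist hh zz = L := hhd zz hzz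
        have t3 : Γ.dist xs zz ≤ Γ.dist xs hh + Γ.dist hh zz := hc.dist_triangle
        have t4 := LBmain n xs hxs zz hzz
        omega
      · have t1 : Γ.dist a ys = A + L := hysd a ha
        have t2 : Γ.dist ys gg = L := ggd ys hys
        have t3 : Γ.dist a gg ≤ Γ.dist a ys + Γ.dist ys gg := hc.dist_triangle
        have t4 := LBmain n a ha gg ggmem
        omega

end accessors

end LocalToGlobalAux

/-- Local-to-global: a bi-infinite local `L`-clique-path in a locally finite Helly
graph is an `L`-clique-path; in particular vertices of `σ n` and `σ m` are at
distance at least `|n - m| · L`. -/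
theorem local_to_global_clique_path {V : Type*} (Γ : SimpleGraph V)
    (hΓ : IsHellyGraph Γ) (hlf : ∀ v : V, (Γ.neighborSet v).Finite)
    (L : ℕ) (hL : 1 ≤ L) (σ : ℤ → Set V) (hσ : IsLocalCliquePathZ Γ L σ) :
    IsCliquePathZ Γ L σ ∧
    ∀ (n m : ℤ) (x y : V), x ∈ σ n → y ∈ σ m →
      (n - m).natAbs * L ≤ Γ.dist x y := by
  classical
  have σeq : ∀ a b : ℤ, a = b → σ a = σ b := fun a b h => by rw [h]
  have hkey := LocalToGlobalAux.key (σ := σ) (hσ := hσ) (hΓ := hΓ) (hL := hL)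
  have TD : ∀ n m : ℤ, n ≠ m → TransDist Γ (σ n) (σ m) ((n - m).natAbs * L) := by
    intro n m hne
    rcases lt_or_gt_of_ne hne with h | h
    · have h1 := hkey (m - n).toNat (by omega) n
      rw [σeq (n + ((m - n).toNat : ℤ)) m (by omega)] at h1
      rw [show (n - m).natAbs = (m - n).toNat by omega]
      exact h1
    · have h1 := hkey (n - m).toNat (by omega) m
      rw [σeq (m + ((n - m).toNat : ℤ)) n (by omega)] at h1
      rw [show (n - m).natAbs = (n - m).toNat by omega]
      exact LocalToGlobalAux.TD_symm h1
  refine ⟨⟨fun n => ⟨LocalToGlobalAux.cliq hσ n, LocalToGlobalAux.nonemp hσ n⟩, ?_, TD, ?_⟩, ?_⟩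
  · intro n m hne
    rw [Set.disjoint_left]
    intro a han ham
    have h := (TD n m hne).1 a han a ham
    rw [SimpleGraph.dist_self] at h
    have h2 : (n - m).natAbs ≠ 0 := by omega
    have h3 : (n - m).natAbs * L ≠ 0 := Nat.mul_ne_zero h2 (by omega)
    omega
  · intro n ρ h1 h2 h3 h4
    have H := LocalToGlobalAux.maxi hσ (n - 1) h1
      (σeq n (n - 1 + 1) (by ring) ▸ h2)
      h3 (σeq (n + 1) (n - 1 + 2) (by ring) ▸ h4)
    rw [σeq (n - 1 + 1) n (by ring)] at H
    exact H
  · intro n m x y hx hy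
    by_cases hne : n = m
    · subst hne; simp
    · exact (TD n m hne).1 x hx y hy
end
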